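/- arXiv:math/0601359 — 11 statements merged into one kernel-verified Lean document; each statement's English description precedes it below -/
import Mathlib

section
/- Let G be a group possessing a finite normal series 1 = G₀ ⊴ G₁ ⊴ ⋯ ⊴ G_c = G in which every term G_i is normal in G and, for each i, the quotient G_{i+1}/G_i is either cyclic or contained in the center Z(G/G_i) of G/G_i. Then for every set X and every faithful action of G on X there exists a distinguishing (c+1)-coloring of X. -/
open scoped Classical

namespace DistSeriesAux

variable {G : Type*} [Group G] {X : Type*}

variable (φ : G →* Equiv.Perm X)

lemma happ (g h : G) (x : X) : φ (g * h) x = φ g (φ h x) := by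
  rw [map_mul]; rfl

/-- The subgroup of elements preserving a coloring `f`. -/
def pres (f : X → ℕ) : Subgroup G where
  carrier := {g | ∀ x, f (φ g x) = f x}
  one_mem' := fun x => by simp
  mul_mem' := by
    intro a b ha hb x
    rw [happ, ha, hb]
  inv_mem' := by
    intro a ha x
    have h2 : φ a (φ a⁻¹ x) = x := by
      rw [← happ, mul_inv_cancel, map_one]; rfl
    have := ha (φ a⁻¹ x)
    rw [h2] at this
    exact this.symm

lemma mem_pres {f : X → ℕ} {g : G} : g ∈ pres φ f ↔ ∀ x, f (φ g x) = f x := Iff.rfl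

/-- Orbit relation of a subgroup `A` acting via `φ`. -/
def orel (A : Subgroup G) (x y : X) : Prop := ∃ a ∈ A, φ a x = y

lemma orel_refl (A : Subgroup G) (x : X) : orel φ A x x := ⟨1, A.one_mem, by simp⟩

lemma orel_symm {A : Subgroup G} {x y : X} (h : orel φ A x y) : orel φ A y x := by
  obtain ⟨a, ha, hax⟩ := h
  exact ⟨a⁻¹, A.inv_mem ha, by rw [← hax, ← happ, inv_mul_cancel, map_one]; rfl⟩

lemma orel_trans {A : Subgroup G} {x y z : X} (h1 : orel φ A x y) (h2 : orel φ A y z) :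
    orel φ A x z := by
  obtain ⟨a, ha, hax⟩ := h1
  obtain ⟨b, hb, hby⟩ := h2
  exact ⟨b * a, A.mul_mem hb ha, by rw [happ, hax, hby]⟩

/-- The orbit setoid. -/
def osetoid (A : Subgroup G) : Setoid X :=
  ⟨orel φ A, ⟨fun x => orel_refl φ A x, fun h => orel_symm φ h,
    fun h1 h2 => orel_trans φ h1 h2⟩⟩

/-- A choice of representative of each orbit. -/
noncomputable def rep (A : Subgroup G) (x : X) : X :=
  (Quotient.mk (osetoid φ A) x).out

lemma rep_rel (A : Subgroup G) (x : X) : orel φ A (rep φ A x) x :=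
  Quotient.exact (Quotient.out_eq (Quotient.mk (osetoid φ A) x))

lemma rep_congr {A : Subgroup G} {x y : X} (h : orel φ A x y) :
    rep φ A x = rep φ A y := by
  unfold rep
  rw [Quotient.sound (s := osetoid φ A) h]

/-- The marking condition at a step: `x` is in the background, is the chosen
representative of its `A`-orbit, and its orbit is not a singleton. -/
def scond (H' : ℕ → Subgroup G) (i : ℕ) (f : X → ℕ) (x : X) : Prop :=
  f x = 0 ∧ rep φ (pres φ f ⊓ H' (i + 1)) x = x ∧
    ∃ a ∈ pres φ f ⊓ H' (i + 1), φ a x ≠ x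

/-- The recursively defined colorings. -/
noncomputable def col (H' : ℕ → Subgroup G) : ℕ → X → ℕ :=
  fun i => Nat.rec (fun _ => 0)
    (fun i f x => if scond φ H' i f x then i + 1 else f x) i

lemma col_zero (H' : ℕ → Subgroup G) (x : X) : col φ H' 0 x = 0 := rfl

lemma col_succ (H' : ℕ → Subgroup G) (i : ℕ) (x : X) :
    col φ H' (i + 1) x =
      if scond φ H' i (col φ H' i) x then i + 1 else col φ H' i x := rfl

lemma col_le (H' : ℕ → Subgroup G) : ∀ i x, col φ H' i x ≤ i := by
  intro i
  induction i with
  | zero => intro x; exact le_rfl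
  | succ i ih =>
    intro x
    rw [col_succ]
    split
    · exact le_rfl
    · exact (ih x).trans (Nat.le_succ i)

lemma mem_S_iff (H' : ℕ → Subgroup G) (i : ℕ) (x : X) :
    scond φ H' i (col φ H' i) x ↔ col φ H' (i + 1) x = i + 1 := by
  constructor
  · intro h
    rw [col_succ, if_pos h]
  · intro h
    by_contra hc
    rw [col_succ, if_neg hc] at h
    exact absurd (h ▸ col_le φ H' i x) (by omega)

lemma col_prev (H' : ℕ → Subgroup G) (i : ℕ) (x : X) :
    col φ H' i x = if col φ H' (i + 1) x = i + 1 then 0 else col φ H' (i + 1) x := by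
  by_cases h : scond φ H' i (col φ H' i) x
  · rw [if_pos ((mem_S_iff φ H' i x).mp h)]
    exact h.1
  · have h2 : col φ H' (i + 1) x = col φ H' i x := by rw [col_succ, if_neg h]
    rw [if_neg, h2]
    rw [h2]
    have := col_le φ H' i x
    omega

lemma pres_mono {H' : ℕ → Subgroup G} {i : ℕ} {g : G}
    (hg : g ∈ pres φ (col φ H' (i + 1))) : g ∈ pres φ (col φ H' i) := by
  intro x
  rw [col_prev φ H' i x, col_prev φ H' i (φ g x), hg x]

/-- The main induction: the two invariants. -/
theorem key (hinj : Function.Injective φ) (H' : ℕ → Subgroup G)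
    (hnorm : ∀ n, (H' n).Normal) (h0 : H' 0 = ⊥) (N : ℕ)
    (hcomm : ∀ i, i + 1 ≤ N → ∀ g ∈ H' (i + 1), ∀ h ∈ H' (i + 1),
      g * h * g⁻¹ * h⁻¹ ∈ H' i) :
    ∀ i, i ≤ N →
      (∀ g ∈ H' i, g ∈ pres φ (col φ H' i) → g = 1) ∧
      (∀ g ∈ pres φ (col φ H' i),
        (∀ x, col φ H' i x = 0 → φ g x = x) → g = 1) := by
  intro i
  induction i with
  | zero =>
    intro _
    constructor
    · intro g hg _
      rw [h0, Subgroup.mem_bot] at hg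
      exact hg
    · intro g _ hfix
      apply hinj
      rw [map_one]
      ext x
      exact hfix x (col_zero φ H' x)
  | succ i IH =>
    intro hiN
    obtain ⟨ai, bi⟩ := IH (by omega)
    set f := col φ H' i with hf
    set A := pres φ f ⊓ H' (i + 1) with hA
    have hab : ∀ g ∈ A, ∀ h ∈ A, g * h = h * g := by
      intro g hg h hh
      have hk : g * h * g⁻¹ * h⁻¹ ∈ H' i := hcomm i hiN g hg.2 h hh.2
      have hkp : g * h * g⁻¹ * h⁻¹ ∈ pres φ f :=
        mul_mem (mul_mem (mul_mem hg.1 hh.1) (inv_mem hg.1)) (inv_mem hh.1)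
      have h1 : g * h * g⁻¹ * h⁻¹ = 1 := ai _ hk hkp
      open scoped commutatorElement in
      have : ⁅g, h⁆ = 1 := h1
      open scoped commutatorElement in
      exact commutatorElement_eq_one_iff_mul_comm.mp this
    constructor
    · -- invariant (a) at i+1
      intro g hg hgp
      have hgf : g ∈ pres φ f := pres_mono φ hgp
      have hgA : g ∈ A := ⟨hgf, hg⟩
      apply bi g hgf
      intro x hx0
      by_cases hsing : ∀ a ∈ A, φ a x = x
      · exact hsing g hgA
      · push_neg at hsing
        obtain ⟨a, haA, hax⟩ := hsing
        set x₀ := rep φ A x with hx₀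
        obtain ⟨b, hbA, hbx⟩ := rep_rel φ A x
        -- hbx : φ b x₀ = x
        have hfx₀ : f x₀ = 0 := by
          have := hbA.1 x₀
          rw [hbx] at this
          rw [← this, hx0]
        have hrx₀ : rep φ A x₀ = x₀ := by
          have h2 : orel φ A x₀ x := ⟨b, hbA, hbx⟩
          rw [rep_congr φ h2, ← hx₀]
        have hns : ∃ a' ∈ A, φ a' x₀ ≠ x₀ := by
          refine ⟨b⁻¹ * a * b, A.mul_mem (A.mul_mem (A.inv_mem hbA) haA) hbA, ?_⟩
          intro hcon
          apply hax
          have : φ (b * (b⁻¹ * a * b)) x₀ = φ b x₀ := by rw [happ, hcon]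
          rw [show b * (b⁻¹ * a * b) = a * b by group, happ, hbx] at this
          exact this
        have hx₀S : scond φ H' i f x₀ := ⟨hfx₀, hrx₀, hns⟩
        have hgx₀S : scond φ H' i f (φ g x₀) := by
          rw [mem_S_iff] at hx₀S ⊢
          rw [hgp x₀, hx₀S]
        have hgx₀ : φ g x₀ = x₀ := by
          have h1 : orel φ A x₀ (φ g x₀) := ⟨g, hgA, rfl⟩
          have h2 := rep_congr φ h1
          rw [hrx₀] at h2
          rw [← hgx₀S.2.1, ← h2]
        calc φ g x = φ g (φ b x₀) := by rw [hbx]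
          _ = φ (g * b) x₀ := (happ φ g b x₀).symm
          _ = φ (b * g) x₀ := by rw [hab g hgA b hbA]
          _ = φ b (φ g x₀) := happ φ b g x₀
          _ = φ b x₀ := by rw [hgx₀]
          _ = x := hbx
    · -- invariant (b) at i+1
      intro g hgp hfix
      have hgf : g ∈ pres φ f := pres_mono φ hgp
      apply bi g hgf
      intro x hx0
      by_cases hxS : scond φ H' i f x
      · obtain ⟨hf0, hrx, a, haA, hax⟩ := hxS
        have hxS' : scond φ H' i f x := ⟨hf0, hrx, a, haA, hax⟩
        set y := φ a x with hy
        have hyO : orel φ A x y := ⟨a, haA, rfl⟩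
        have hyS : ¬ scond φ H' i f y := by
          intro hcon
          apply hax
          have := rep_congr φ hyO
          rw [hrx, hcon.2.1] at this
          exact this.symm
        have hyc : col φ H' (i + 1) y = 0 := by
          rw [col_succ, if_neg hyS]
          show f y = 0
          have := haA.1 x
          rw [← hy] at this
          rw [this]
          exact hf0
        have hgy : φ g y = y := hfix y hyc
        have hgxS : scond φ H' i f (φ g x) := by
          rw [mem_S_iff] at hxS' ⊢
          rw [hgp x, hxS']
        have ha' : g * a * g⁻¹ ∈ A :=
          ⟨(pres φ f).mul_mem ((pres φ f).mul_mem hgf haA.1) ((pres φ f).inv_mem hgf),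
            (hnorm (i + 1)).conj_mem a haA.2 g⟩
        have key1 : φ (g * a * g⁻¹) (φ g x) = y := by
          rw [← happ, show g * a * g⁻¹ * g = g * a by group, happ, ← hy, hgy]
        have horel : orel φ A (φ g x) x :=
          orel_trans φ ⟨_, ha', key1⟩ (orel_symm φ hyO)
        have h2 : rep φ A (φ g x) = x := by rw [rep_congr φ horel, hrx]
        exact hgxS.2.1.symm.trans h2
      · have : col φ H' (i + 1) x = 0 := by
          rw [col_succ, if_neg hxS]
          exact hx0
        exact hfix x this

lemma comm_aux {G : Type*} [Group G] (K N : Subgroup G) [N.Normal]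
    (hq : IsCyclic (K.map (QuotientGroup.mk' N)) ∨
      K.map (QuotientGroup.mk' N) ≤ Subgroup.center (G ⧸ N)) :
    ∀ g ∈ K, ∀ h ∈ K, g * h * g⁻¹ * h⁻¹ ∈ N := by
  intro g hg h hh
  set π := QuotientGroup.mk' N with hπ
  have hgm : π g ∈ K.map π := Subgroup.mem_map_of_mem π hg
  have hhm : π h ∈ K.map π := Subgroup.mem_map_of_mem π hh
  have hco : π g * π h = π h * π g := by
    rcases hq with hcy | hcen
    · letI : CommGroup (K.map π) := IsCyclic.commGroup
      have := mul_comm (⟨π g, hgm⟩ : K.map π) ⟨π h, hhm⟩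
      exact congrArg Subtype.val this
    · exact Subgroup.mem_center_iff.mp (hcen hhm) (π g)
  have hmem : g * h * g⁻¹ * h⁻¹ ∈ π.ker := by
    rw [MonoidHom.mem_ker, map_mul, map_mul, map_mul, map_inv, map_inv, hco]
    group
  rwa [hπ, QuotientGroup.ker_mk'] at hmem

end DistSeriesAux

/-- If `G` has a finite normal series `1 = H 0 ⊴ H 1 ⊴ ⋯ ⊴ H c = G` (each term normal in `G`)
in which each quotient `H (i+1) / H i` is cyclic or contained in the center of `G / H i`,
then every faithful action of `G` on any set `X` admits a distinguishing `(c+1)`-coloring.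
Faithful actions are encoded as injective homomorphisms into the permutation group. -/
theorem distinguishing_of_normalSeries {G : Type*} [Group G] (c : ℕ)
    (H : Fin (c + 1) → Subgroup G)
    (hnorm : ∀ i, (H i).Normal)
    (hmono : Monotone H)
    (h0 : H 0 = ⊥) (htop : H (Fin.last c) = ⊤)
    (hquot : ∀ i : Fin c,
      haveI := hnorm i.castSucc
      IsCyclic ((H i.succ).map (QuotientGroup.mk' (H i.castSucc))) ∨
        (H i.succ).map (QuotientGroup.mk' (H i.castSucc)) ≤
          Subgroup.center (G ⧸ H i.castSucc)) :
    ∀ (X : Type*) (φ : G →* Equiv.Perm X), Function.Injective φ →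
      ∃ col : X → Fin (c + 1), ∀ g : G, (∀ x : X, col (φ g x) = col x) → g = 1 := by
  intro X φ hinj
  set H' : ℕ → Subgroup G := fun n => H ⟨min n c, by omega⟩ with hH'
  have hnorm' : ∀ n, (H' n).Normal := fun n => hnorm _
  have h0' : H' 0 = ⊥ := by
    have : (⟨min 0 c, by omega⟩ : Fin (c + 1)) = 0 := by
      ext; simp
    rw [hH']
    simp only [this]
    exact h0
  have hcomm : ∀ i, i + 1 ≤ c → ∀ g ∈ H' (i + 1), ∀ h ∈ H' (i + 1),
      g * h * g⁻¹ * h⁻¹ ∈ H' i := by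
    intro i hic g hg h hh
    have hic' : i < c := by omega
    have hecs : (⟨min i c, by omega⟩ : Fin (c + 1)) = (⟨i, hic'⟩ : Fin c).castSucc := by
      rw [Fin.castSucc_mk]
      apply Fin.ext
      simp
      omega
    have hess : (⟨min (i + 1) c, by omega⟩ : Fin (c + 1)) = (⟨i, hic'⟩ : Fin c).succ := by
      rw [Fin.succ_mk]
      apply Fin.ext
      simp
      omega
    simp only [hH'] at hg hh ⊢
    rw [hess] at hg hh
    rw [hecs]
    haveI := hnorm ((⟨i, hic'⟩ : Fin c).castSucc)
    exact DistSeriesAux.comm_aux _ _ (hquot ⟨i, hic'⟩) g hg h hh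
  obtain ⟨ac, _⟩ := DistSeriesAux.key φ hinj H' hnorm' h0' c hcomm c le_rfl
  refine ⟨fun x => ⟨DistSeriesAux.col φ H' c x,
      Nat.lt_succ_of_le (DistSeriesAux.col_le φ H' c x)⟩, ?_⟩
  intro g hg
  apply ac g
  · have : H' c = ⊤ := by
      rw [hH']
      have : (⟨min c c, by omega⟩ : Fin (c + 1)) = Fin.last c := by
        ext; simp
      simp only [this]
      exact htop
    rw [this]
    trivial
  · intro x
    have := hg x
    exact congrArg Fin.val this
end

section
/- Let G be a nilpotent group of nilpotency class c. Then for every set X and every faithful action of G on X there exists a distinguishing (c+1)-coloring of X. -/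
section Aux
variable {G X : Type*} [Group G] (φ : G →* Equiv.Perm X)

/-- The orbit equivalence relation of a subgroup acting via `φ`. -/
def orbSetoid (H : Subgroup G) : Setoid X where
  r x y := ∃ z ∈ H, φ z x = y
  iseqv := by
    refine ⟨fun x => ⟨1, H.one_mem, by simp⟩, ?_, ?_⟩
    · rintro x y ⟨z, hz, rfl⟩
      exact ⟨z⁻¹, H.inv_mem hz, by simp⟩
    · rintro x y z ⟨a, ha, rfl⟩ ⟨b, hb, rfl⟩
      exact ⟨b * a, H.mul_mem hb ha, by simp⟩

/-- Choose a representative of the `H`-orbit of `x`. -/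
noncomputable def pickAux (H : Subgroup G) (x : X) : X :=
  (Quotient.mk (orbSetoid φ H) x).out

lemma pickAux_spec (H : Subgroup G) (x : X) :
    ∃ z ∈ H, φ z (pickAux φ H x) = x :=
  Quotient.mk_out (s := orbSetoid φ H) x

lemma pickAux_congr (H : Subgroup G) {x y : X} (h : ∃ z ∈ H, φ z x = y) :
    pickAux φ H x = pickAux φ H y := by
  unfold pickAux
  exact congrArg Quotient.out (Quotient.sound h)

/-- Nested transversals: `tAux φ i` retracts `X` onto a transversal of the
orbits of the `i`-th term of the upper central series. -/
noncomputable def tAux : ℕ → X → X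
  | 0 => id
  | (i + 1) => fun x => tAux i (pickAux φ (upperCentralSeries G (i + 1)) x)

lemma tAux_rel : ∀ (i : ℕ) (x : X), ∃ z ∈ upperCentralSeries G i, φ z x = tAux φ i x
  | 0, x => ⟨1, Subgroup.one_mem _, by simp [tAux]⟩
  | (i + 1), x => by
    obtain ⟨z1, hz1, h1⟩ := pickAux_spec φ (upperCentralSeries G (i + 1)) x
    obtain ⟨z2, hz2, h2⟩ := tAux_rel i (pickAux φ (upperCentralSeries G (i + 1)) x)
    refine ⟨z2 * z1⁻¹, Subgroup.mul_mem _
      (upperCentralSeries_mono G (Nat.le_succ i) hz2) (Subgroup.inv_mem _ hz1), ?_⟩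
    have h1' : φ z1⁻¹ x = pickAux φ (upperCentralSeries G (i + 1)) x := by
      have := congrArg (⇑(φ z1⁻¹)) h1
      rw [← this]
      simp [map_inv]
    show φ (z2 * z1⁻¹) x = tAux φ i (pickAux φ (upperCentralSeries G (i + 1)) x)
    rw [map_mul, Equiv.Perm.mul_apply, h1', h2]

lemma tAux_congr : ∀ (i : ℕ) {x y : X},
    (∃ z ∈ upperCentralSeries G i, φ z x = y) → tAux φ i x = tAux φ i y
  | 0, x, y => by
    rintro ⟨z, hz, rfl⟩
    change z ∈ (⊥ : Subgroup G) at hz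
    rw [Subgroup.mem_bot] at hz
    simp [hz]
  | (i + 1), x, y => fun h => by
    simp only [tAux]
    rw [pickAux_congr φ _ h]

lemma tAux_idem (i : ℕ) (x : X) : tAux φ i (tAux φ i x) = tAux φ i x :=
  (tAux_congr φ i (tAux_rel φ i x)).symm

lemma tAux_down (i : ℕ) {x : X} (h : tAux φ (i + 1) x = x) : tAux φ i x = x := by
  have e : tAux φ (i + 1) x = tAux φ i (pickAux φ (upperCentralSeries G (i + 1)) x) := rfl
  calc tAux φ i x = tAux φ i (tAux φ (i + 1) x) := by rw [h]
    _ = tAux φ (i + 1) x := by rw [e, tAux_idem]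
    _ = x := h

lemma tAux_le : ∀ {i j : ℕ}, i ≤ j → ∀ {x : X}, tAux φ j x = x → tAux φ i x = x := by
  intro i j hij
  induction j with
  | zero =>
    obtain rfl : i = 0 := Nat.le_zero.mp hij
    exact fun h => h
  | succ n ih =>
    intro x h
    rcases Nat.le_succ_iff.mp hij with hin | rfl
    · exact ih hin (tAux_down φ n h)
    · exact h

end Aux
lemma comm_mem {G : Type*} [Group G] {g w : G} {i : ℕ}
    (hw : w ∈ upperCentralSeries G (i + 1)) :
    g⁻¹ * w⁻¹ * g * w ∈ upperCentralSeries G i := by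
  have h1 : w⁻¹ * g * w⁻¹⁻¹ * g⁻¹ ∈ upperCentralSeries G i :=
    mem_upperCentralSeries_succ_iff.mp (Subgroup.inv_mem _ hw) g
  have h2 := (inferInstance : (Subgroup.upperCentralSeries G i).Normal).conj_mem _ h1 g⁻¹
  have h3 : g⁻¹ * (w⁻¹ * g * w⁻¹⁻¹ * g⁻¹) * g⁻¹⁻¹ = g⁻¹ * w⁻¹ * g * w := by group
  rwa [h3] at h2

lemma key1 {G X : Type*} [Group G] (φ : G →* Equiv.Perm X) (g : G) {y : X}
    (hy : φ g y = y) :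
    ∀ (i : ℕ), ∀ w ∈ upperCentralSeries G (i + 1),
      ∃ u ∈ upperCentralSeries G i, φ (g * w) y = φ (w * u) y := by
  intro i
  induction i with
  | zero =>
    intro w hw
    change w ∈ Subgroup.upperCentralSeries G 1 at hw
    rw [Subgroup.upperCentralSeries_one] at hw
    refine ⟨1, Subgroup.one_mem _, ?_⟩
    have hcomm : g * w = w * g := Subgroup.mem_center_iff.mp hw g
    rw [hcomm, mul_one]
    simp [map_mul, hy]
  | succ i ih =>
    intro w hw
    have hw' : g⁻¹ * w⁻¹ * g * w ∈ upperCentralSeries G (i + 1) := comm_mem hw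
    obtain ⟨u', hu', hu'y⟩ := ih _ hw'
    refine ⟨(g⁻¹ * w⁻¹ * g * w) * u',
      Subgroup.mul_mem _ hw' (upperCentralSeries_mono G (Nat.le_succ i) hu'), ?_⟩
    have hgw : g * w = w * (g * (g⁻¹ * w⁻¹ * g * w)) := by group
    calc φ (g * w) y = φ w (φ (g * (g⁻¹ * w⁻¹ * g * w)) y) := by
          rw [hgw]; simp [map_mul]
      _ = φ w (φ ((g⁻¹ * w⁻¹ * g * w) * u') y) := by rw [hu'y]
      _ = φ (w * ((g⁻¹ * w⁻¹ * g * w) * u')) y := by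
          simp [map_mul]

/-- If `G` is nilpotent of nilpotency class `c`, then every faithful action of `G` on any
set `X` admits a distinguishing `(c+1)`-coloring. Faithful actions are encoded as injective
homomorphisms into the permutation group. -/
theorem distinguishing_of_nilpotent {G : Type*} [Group G] [Group.IsNilpotent G]
    (c : ℕ) (hc : Group.nilpotencyClass G = c) :
    ∀ (X : Type*) (φ : G →* Equiv.Perm X), Function.Injective φ →
      ∃ col : X → Fin (c + 1), ∀ g : G, (∀ x : X, col (φ g x) = col x) → g = 1 := by
  intro X φ hφ
  classical
  have hSc : upperCentralSeries G c = ⊤ := by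
    rw [← hc]; exact upperCentralSeries_nilpotencyClass
  refine ⟨fun x => ⟨Nat.findGreatest (fun i => tAux φ i x = x) c,
    Nat.lt_succ_of_le (Nat.findGreatest_le c)⟩, ?_⟩
  intro g hg
  have hg' : ∀ x : X, Nat.findGreatest (fun i => tAux φ i (φ g x) = φ g x) c
      = Nat.findGreatest (fun i => tAux φ i x = x) c := by
    intro x
    exact congrArg Fin.val (hg x)
  have colSpec : ∀ x : X,
      tAux φ (Nat.findGreatest (fun i => tAux φ i x = x) c) x = x := by
    intro x
    exact Nat.findGreatest_spec (P := fun i => tAux φ i x = x) (Nat.zero_le c) rfl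
  have main : ∀ d : ℕ, ∀ x : X, tAux φ (c - d) x = x → φ g x = x := by
    intro d
    induction d with
    | zero =>
      intro x hx
      rw [Nat.sub_zero] at hx
      have hcolx : Nat.findGreatest (fun i => tAux φ i x = x) c = c :=
        le_antisymm (Nat.findGreatest_le c) (Nat.le_findGreatest le_rfl hx)
      have hcolgx : Nat.findGreatest (fun i => tAux φ i (φ g x) = φ g x) c = c := by
        rw [hg' x, hcolx]
      have h2 : tAux φ c (φ g x) = φ g x := by
        have h2' := colSpec (φ g x)
        rwa [hcolgx] at h2'
      have h3 : tAux φ c x = tAux φ c (φ g x) :=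
        tAux_congr φ c ⟨g, by rw [hSc]; trivial, rfl⟩
      rw [hx, h2] at h3
      exact h3.symm
    | succ d ih =>
      intro x hx
      by_cases hx1 : tAux φ (c - d) x = x
      · exact ih x hx1
      · have hdc : d < c := by
          by_contra hle
          have he : c - d = c - (d + 1) := by omega
          rw [he] at hx1
          exact hx1 hx
        have hsucc : c - (d + 1) + 1 = c - d := by omega
        set i := c - (d + 1) with hi
        have hci : Nat.findGreatest (fun j => tAux φ j x = x) c = i := by
          refine le_antisymm ?_ (Nat.le_findGreatest (by omega) hx)
          by_contra hlt
          push_neg at hlt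
          have h2 : tAux φ (i + 1) x = x := tAux_le φ (by omega) (colSpec x)
          rw [hsucc] at h2
          exact hx1 h2
        have hcgx : Nat.findGreatest (fun j => tAux φ j (φ g x) = φ g x) c = i := by
          rw [hg' x, hci]
        have hgfix : tAux φ i (φ g x) = φ g x := by
          have h2' := colSpec (φ g x)
          rwa [hcgx] at h2'
        set y := tAux φ (c - d) x with hy
        have hyfix : tAux φ (c - d) y = y := tAux_idem φ _ x
        have hay : φ g y = y := ih y hyfix
        obtain ⟨z, hz, hzx⟩ := tAux_rel φ (c - d) x
        rw [← hy] at hzx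
        have hx' : φ z⁻¹ y = x := by
          rw [← hzx]
          simp [map_inv]
        have hz' : z⁻¹ ∈ upperCentralSeries G (i + 1) := by
          rw [hsucc]; exact Subgroup.inv_mem _ hz
        obtain ⟨u, hu, huy⟩ := key1 φ g hay i z⁻¹ hz'
        have heq : φ g x = φ (z⁻¹ * u * z) x := by
          rw [← hx']
          calc φ g (φ z⁻¹ y) = φ (g * z⁻¹) y := by simp [map_mul]
            _ = φ (z⁻¹ * u) y := huy
            _ = φ (z⁻¹ * u * z) (φ z⁻¹ y) := by
                simp [map_mul]
        have hmem : z⁻¹ * u * z ∈ upperCentralSeries G i := by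
          have h4 := (inferInstance : (Subgroup.upperCentralSeries G i).Normal).conj_mem u hu z⁻¹
          rwa [inv_inv] at h4
        have h5 : tAux φ i x = tAux φ i (φ g x) :=
          tAux_congr φ i ⟨z⁻¹ * u * z, hmem, heq.symm⟩
        rw [hx, hgfix] at h5
        exact h5.symm
  have hall : ∀ x : X, φ g x = x := fun x => main c x (by rw [Nat.sub_self]; rfl)
  apply hφ
  rw [map_one]
  exact Equiv.ext hall
end

section
/- Let G be a supersolvable group of length c, i.e., G possesses a finite normal series 1 = G₀ ⊴ G₁ ⊴ ⋯ ⊴ G_c = G with every G_i normal in G and every quotient G_{i+1}/G_i cyclic. Then for every set X and every faithful action of G on X there exists a distinguishing (c+1)-coloring of X. -/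
theorem Equiv.Perm.inv_apply_self {α : Type*} (f : Equiv.Perm α) (x : α) : f⁻¹ (f x) = x :=
  f.symm_apply_apply x

theorem Equiv.Perm.apply_inv_self {α : Type*} (f : Equiv.Perm α) (x : α) : f (f⁻¹ x) = x :=
  f.apply_symm_apply x

private lemma fixzpow {X : Type*} (π : Equiv.Perm X) (x : X) (h : π x = x) :
    ∀ z : ℤ, (π ^ z) x = x := by
  have hn : ∀ n : ℕ, (π ^ n) x = x := by
    intro n
    induction n with
    | zero => simp
    | succ n ih => rw [pow_succ, Equiv.Perm.mul_apply, h, ih]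
  intro z
  obtain ⟨n, rfl | rfl⟩ := z.eq_nat_or_neg
  · simpa using hn n
  · rw [zpow_neg, zpow_natCast]
    apply (π ^ n).injective
    rw [Equiv.Perm.apply_inv_self, hn n]

private theorem key {G : Type*} [Group G] (K : ℕ → Subgroup G)
    (hnormK : ∀ i, (K i).Normal)
    (hcyc : ∀ i : ℕ, ∃ τ ∈ K (i + 1), ∀ h ∈ K (i + 1), ∃ z : ℤ, τ ^ z * h⁻¹ ∈ K i) :
    ∀ (m : ℕ) (X : Type*) (φ : G →* Equiv.Perm X) (k : ℕ),
      (∀ h ∈ K k, φ h = 1) → (∀ g : G, g ∈ K (k + m)) →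
      ∃ col : X → Fin (m + 1), ∀ g : G, (∀ x, col (φ g x) = col x) → φ g = 1 := by
  intro m
  induction m with
  | zero =>
    intro X φ k htriv hall
    exact ⟨fun _ => 0, fun g _ => htriv g (hall g)⟩
  | succ m IH =>
    intro X φ k htriv hall
    classical
    obtain ⟨τ, hτmem, hτ⟩ := hcyc k
    set T : Equiv.Perm X := φ τ with hT
    have hcommT : ∀ (a b : ℤ) (x : X), (T ^ a) ((T ^ b) x) = (T ^ b) ((T ^ a) x) := by
      intro a b x
      rw [← Equiv.Perm.mul_apply, ← Equiv.Perm.mul_apply, ← zpow_add, ← zpow_add, add_comm]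
    have himg : ∀ h, h ∈ K (k + 1) → ∃ z : ℤ, φ h = T ^ z := by
      intro h hh
      obtain ⟨z, hz⟩ := hτ h hh
      refine ⟨z, ?_⟩
      have h1 : φ (τ ^ z * h⁻¹) = 1 := htriv _ hz
      rw [map_mul, map_inv, map_zpow] at h1
      have h2 := mul_inv_eq_one.mp h1
      rw [hT]
      exact h2.symm
    have hconj : ∀ g' : G, ∃ z : ℤ, φ g' * T * (φ g')⁻¹ = T ^ z := by
      intro g'
      have hmem : g' * τ * g'⁻¹ ∈ K (k + 1) := (hnormK (k + 1)).conj_mem τ hτmem g'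
      obtain ⟨z, hz⟩ := himg _ hmem
      refine ⟨z, ?_⟩
      simp only [map_mul, map_inv] at hz
      rw [← hT] at hz
      exact hz
    have hstab : ∀ (z : ℤ) (g' : G) (x : X), (T ^ z) x = x → (T ^ z) (φ g' x) = φ g' x := by
      intro z g' x hx
      obtain ⟨i, hi⟩ := hconj g'⁻¹
      have hi' : (φ g')⁻¹ * T * φ g' = T ^ i := by simpa [map_inv] using hi
      have h1 := map_zpow (MulAut.conj ((φ g')⁻¹)) T z
      simp only [MulAut.conj_apply, inv_inv] at h1
      -- h1 : (φ g')⁻¹ * T ^ z * φ g' = ((φ g')⁻¹ * T * φ g') ^ z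
      rw [hi', ← zpow_mul, mul_comm, zpow_mul] at h1
      have h2 := congrArg (fun π : Equiv.Perm X => π x) h1
      simp only [Equiv.Perm.mul_apply] at h2
      rw [fixzpow (T ^ z) x hx i] at h2
      -- h2 : (φ g')⁻¹ ((T ^ z) (φ g' x)) = x
      apply ((φ g')⁻¹ : Equiv.Perm X).injective
      rw [h2, Equiv.Perm.inv_apply_self]
    have hsingt : ∀ (g' : G) (x : X), T x = x → T (φ g' x) = φ g' x := by
      intro g' x hx
      have := hstab 1 g' x (by simpa using hx)
      simpa using this
    -- the orbit setoid
    let sr : X → X → Prop := fun a b => ∃ z : ℤ, (T ^ z) a = b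
    have hsr_refl : ∀ x, sr x x := fun x => ⟨0, by simp⟩
    have hsr_symm : ∀ {a b}, sr a b → sr b a := by
      rintro a b ⟨z, rfl⟩
      exact ⟨-z, by rw [← Equiv.Perm.mul_apply, ← zpow_add, neg_add_cancel, zpow_zero,
        Equiv.Perm.one_apply]⟩
    have hsr_trans : ∀ {a b c}, sr a b → sr b c → sr a c := by
      rintro a b c ⟨z1, rfl⟩ ⟨z2, rfl⟩
      exact ⟨z2 + z1, by rw [zpow_add, Equiv.Perm.mul_apply]⟩
    let s : Setoid X := ⟨sr, ⟨hsr_refl, hsr_symm, hsr_trans⟩⟩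
    have hmap : ∀ (g : G) (a b : X), sr a b → sr (φ g a) (φ g b) := by
      rintro g a b ⟨z, rfl⟩
      have hmem : g * τ ^ z * g⁻¹ ∈ K (k + 1) :=
        (hnormK (k + 1)).conj_mem _ (Subgroup.zpow_mem _ hτmem z) g
      obtain ⟨w, hw⟩ := himg _ hmem
      refine ⟨w, ?_⟩
      have h1 : φ (g * τ ^ z * g⁻¹) * φ g = φ (g * τ ^ z) := by
        rw [← map_mul]
        congr 1
        group
      calc (T ^ w) (φ g a) = (φ (g * τ ^ z * g⁻¹) * φ g) a := by
            rw [hw, Equiv.Perm.mul_apply]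
        _ = φ (g * τ ^ z) a := by rw [h1]
        _ = φ g ((T ^ z) a) := by
            rw [map_mul, Equiv.Perm.mul_apply, map_zpow, ← hT]
    let P := Quotient s
    let φact : G → Equiv.Perm P := fun g =>
      { toFun := Quotient.map (φ g) (hmap g)
        invFun := Quotient.map (φ g⁻¹) (hmap g⁻¹)
        left_inv := by
          intro q
          induction q using Quotient.ind with
          | _ a =>
            show Quotient.map (φ g⁻¹) (hmap g⁻¹) (Quotient.map (φ g) (hmap g)
              (Quotient.mk s a)) = Quotient.mk s a
            rw [Quotient.map_mk, Quotient.map_mk]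
            congr 1
            rw [← Equiv.Perm.mul_apply, ← map_mul, inv_mul_cancel, map_one,
              Equiv.Perm.one_apply]
        right_inv := by
          intro q
          induction q using Quotient.ind with
          | _ a =>
            show Quotient.map (φ g) (hmap g) (Quotient.map (φ g⁻¹) (hmap g⁻¹)
              (Quotient.mk s a)) = Quotient.mk s a
            rw [Quotient.map_mk, Quotient.map_mk]
            congr 1
            rw [← Equiv.Perm.mul_apply, ← map_mul, mul_inv_cancel, map_one,
              Equiv.Perm.one_apply] }
    let φbar : G →* Equiv.Perm P := MonoidHom.mk' φact (by
      intro g₁ g₂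
      apply Equiv.ext
      intro q
      induction q using Quotient.ind with
      | _ a =>
        show Quotient.map (φ (g₁ * g₂)) (hmap _) (Quotient.mk s a) =
          Quotient.map (φ g₁) (hmap _) (Quotient.map (φ g₂) (hmap _) (Quotient.mk s a))
        rw [Quotient.map_mk, Quotient.map_mk, Quotient.map_mk, map_mul,
          Equiv.Perm.mul_apply])
    have hbar_mk : ∀ (g : G) (x : X), φbar g (Quotient.mk s x) = Quotient.mk s (φ g x) :=
      fun g x => rfl
    have htriv' : ∀ h ∈ K (k + 1), φbar h = 1 := by
      intro h hh
      obtain ⟨z, hz⟩ := himg h hh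
      apply Equiv.ext
      intro q
      induction q using Quotient.ind with
      | _ a =>
        show φbar h (Quotient.mk s a) = Quotient.mk s a
        rw [hbar_mk]
        have hsrw : sr a (φ h a) := ⟨z, by rw [← hz]⟩
        exact (Quotient.sound hsrw).symm
    have hall' : ∀ g : G, g ∈ K (k + 1 + m) := by
      intro g
      have h := hall g
      have e : k + (m + 1) = k + 1 + m := by omega
      rwa [e] at h
    obtain ⟨colP, hcolP⟩ := IH P φbar (k + 1) htriv' hall'
    -- same-G-orbit relation on P
    let sameG : P → P → Prop := fun Q Q' => ∃ g : G, φbar g Q = Q'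
    have hsame_refl : ∀ Q, sameG Q Q := fun Q => ⟨1, by rw [map_one, Equiv.Perm.one_apply]⟩
    let oneF : Fin (m + 1) := ⟨1 % (m + 1), Nat.mod_lt 1 (Nat.succ_pos m)⟩
    let colP' : P → Fin (m + 1) := fun Q =>
      if (∀ Q', sameG Q Q' → colP Q' = 0) then oneF else colP Q
    have hcolP'def : ∀ Q, colP' Q =
        if (∀ Q', sameG Q Q' → colP Q' = 0) then oneF else colP Q := fun _ => rfl
    -- the coloring
    let Fc : P → X → Fin (m + 2) := fun Q x =>
      if T Q.out = Q.out then (colP' Q).castSucc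
      else if x = Q.out then Fin.last (m + 1)
      else if x = T Q.out then (colP' Q).castSucc
      else 0
    have hFc : ∀ (Q : P) (x : X), Fc Q x =
        (if T Q.out = Q.out then (colP' Q).castSucc
         else if x = Q.out then Fin.last (m + 1)
         else if x = T Q.out then (colP' Q).castSucc
         else 0) := fun _ _ => rfl
    let col : X → Fin (m + 2) := fun x => Fc (Quotient.mk s x) x
    refine ⟨col, ?_⟩
    intro g hpres
    -- Fin helpers
    have hcs_ne_last : ∀ v : Fin (m + 1), v.castSucc ≠ Fin.last (m + 1) := by
      intro v h
      have := congrArg Fin.val h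
      simp only [Fin.coe_castSucc, Fin.val_last] at this
      omega
    have hcs_zero : ∀ v : Fin (m + 1), v.castSucc = 0 → v = 0 := by
      intro v h
      have := congrArg Fin.val h
      simp only [Fin.coe_castSucc, Fin.val_zero] at this
      exact Fin.ext this
    have hzero_ne_last : (0 : Fin (m + 2)) ≠ Fin.last (m + 1) := by
      intro h
      have := congrArg Fin.val h
      simp only [Fin.val_zero, Fin.val_last] at this
      omega
    -- quotient helpers
    have hout : ∀ Q : P, Quotient.mk s Q.out = Q := fun Q => Quotient.out_eq Q
    have hrel : ∀ {x y : X}, Quotient.mk s x = Quotient.mk s y → ∃ z : ℤ, (T ^ z) x = y :=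
      fun h => Quotient.exact h
    have hTQ : ∀ x : X, Quotient.mk s (T x) = Quotient.mk s x := by
      intro x
      apply Quotient.sound
      exact ⟨-1, by rw [zpow_neg, zpow_one, Equiv.Perm.inv_apply_self]⟩
    have hsingle_out : ∀ x : X, T x = x → (Quotient.mk s x).out = x := by
      intro x hx
      obtain ⟨z, hz⟩ := hrel (hout (Quotient.mk s x))
      have h2 : (T ^ z) x = x := fixzpow T x hx z
      exact (T ^ z).injective (hz.trans h2.symm)
    have hcol_eval : ∀ (x : X) (Q : P), Quotient.mk s x = Q → col x = Fc Q x := by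
      intro x Q h
      show Fc (Quotient.mk s x) x = Fc Q x
      rw [h]
    have hpres_inv : ∀ g' : G, (∀ x, col (φ g' x) = col x) → (∀ x, col (φ g'⁻¹ x) = col x) := by
      intro g' hp x
      have h1 := hp (φ g'⁻¹ x)
      rw [← Equiv.Perm.mul_apply, ← map_mul, mul_inv_cancel, map_one,
        Equiv.Perm.one_apply] at h1
      exact h1.symm
    have hpin_transport : ∀ g' : G, (∀ x, col (φ g' x) = col x) → ∀ Q : P,
        T Q.out ≠ Q.out →
        T (φbar g' Q).out ≠ (φbar g' Q).out ∧ φ g' Q.out = (φbar g' Q).out := by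
      intro g' hp Q hne
      have hp0 : Quotient.mk s Q.out = Q := hout Q
      have hcolp : col Q.out = Fin.last (m + 1) := by
        rw [hcol_eval _ _ hp0, hFc, if_neg hne, if_pos rfl]
      have h1 : col (φ g' Q.out) = Fin.last (m + 1) := (hp _).trans hcolp
      have h2 : Quotient.mk s (φ g' Q.out) = φbar g' Q := by
        rw [← hbar_mk, hp0]
      rw [hcol_eval _ _ h2, hFc] at h1
      split_ifs at h1 with ha hb hc
      · exact absurd h1 (hcs_ne_last _)
      · exact ⟨ha, hb⟩
      · exact absurd h1 (hcs_ne_last _)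
      · exact absurd h1 hzero_ne_last
    have haux : ∀ g' : G, (∀ x, col (φ g' x) = col x) → ∀ Q : P,
        T Q.out ≠ Q.out → colP' Q ≠ 0 → colP' (φbar g' Q) = colP' Q := by
      intro g' hp Q hne hv
      obtain ⟨hne', hσp⟩ := hpin_transport g' hp Q hne
      have hp0 : Quotient.mk s Q.out = Q := hout Q
      have hTpQ : Quotient.mk s (T Q.out) = Q := (hTQ _).trans hp0
      have hcolTp : col (T Q.out) = (colP' Q).castSucc := by
        rw [hcol_eval _ _ hTpQ, hFc, if_neg hne, if_neg hne, if_pos rfl]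
      have h4 : col (φ g' (T Q.out)) = (colP' Q).castSucc := (hp _).trans hcolTp
      have h5 : Quotient.mk s (φ g' (T Q.out)) = φbar g' Q := by
        rw [← hbar_mk, hTpQ]
      rw [hcol_eval _ _ h5, hFc] at h4
      split_ifs at h4 with ha hb hc
      · exact absurd ha hne'
      · exact absurd h4.symm (hcs_ne_last _)
      · exact Fin.castSucc_inj.mp h4
      · exact absurd (hcs_zero _ h4.symm) hv
    have hV3 : ∀ Q : P, colP' (φbar g Q) = colP' Q := by
      intro Q
      by_cases hs : T Q.out = Q.out
      · have hp0 := hout Q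
        have hx : col Q.out = (colP' Q).castSucc := by
          rw [hcol_eval _ _ hp0, hFc, if_pos hs]
        have hy : T (φ g Q.out) = φ g Q.out := hsingt g _ hs
        have hyQ : Quotient.mk s (φ g Q.out) = φbar g Q := by
          rw [← hbar_mk, hp0]
        have hyout : (φbar g Q).out = φ g Q.out := by
          rw [← hyQ]
          exact hsingle_out _ hy
        have hx' : col (φ g Q.out) = (colP' (φbar g Q)).castSucc := by
          rw [hcol_eval _ _ hyQ, hFc, if_pos (by rw [hyout]; exact hy)]
        have h6 := (hpres Q.out).symm.trans hx'
        rw [hx] at h6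
        exact (Fin.castSucc_inj.mp h6).symm
      · by_cases hv : colP' Q = 0
        · by_cases hv' : colP' (φbar g Q) = 0
          · rw [hv, hv']
          · exfalso
            obtain ⟨hne', -⟩ := hpin_transport g hpres Q hs
            have h6 := haux g⁻¹ (hpres_inv g hpres) (φbar g Q) hne' hv'
            have h7 : φbar g⁻¹ (φbar g Q) = Q := by
              rw [map_inv, Equiv.Perm.inv_apply_self]
            rw [h7] at h6
            exact hv' (h6.symm.trans hv)
        · exact haux g hpres Q hs hv
    have hPQ : ∀ Q, colP (φbar g Q) = colP Q := by
      intro Q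
      by_cases hb : ∀ Q', sameG Q Q' → colP Q' = 0
      · have h1 : colP (φbar g Q) = 0 := hb _ ⟨g, rfl⟩
        rw [h1, hb Q (hsame_refl Q)]
      · have hb' : ¬ (∀ Q', sameG (φbar g Q) Q' → colP Q' = 0) := by
          intro hball
          apply hb
          intro Q'' hsg
          obtain ⟨g₂, hg₂⟩ := hsg
          refine hball Q'' ⟨g₂ * g⁻¹, ?_⟩
          rw [map_mul, Equiv.Perm.mul_apply, map_inv, Equiv.Perm.inv_apply_self, hg₂]
        have h := hV3 Q
        rw [hcolP'def, hcolP'def, if_neg hb', if_neg hb] at h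
        exact h
    have IHkill : φbar g = 1 := hcolP g hPQ
    have hfixQ : ∀ x : X, Quotient.mk s (φ g x) = Quotient.mk s x := by
      intro x
      rw [← hbar_mk, IHkill, Equiv.Perm.one_apply]
    have hfixQ' : ∀ Q : P, φbar g Q = Q := by
      intro Q
      rw [IHkill, Equiv.Perm.one_apply]
    -- final pointwise argument
    apply Equiv.ext
    intro x
    rw [Equiv.Perm.one_apply]
    obtain ⟨n, hn⟩ : ∃ n : ℤ, (T ^ n) ((Quotient.mk s x).out) = x :=
      hrel (hout (Quotient.mk s x))
    by_cases hs : T ((Quotient.mk s x).out) = (Quotient.mk s x).out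
    · have hxp : x = (Quotient.mk s x).out := by
        have h0 := fixzpow T _ hs n
        rw [hn] at h0
        exact h0
      have h1 : T x = x := by rw [hxp]; exact hs
      have h2 : Quotient.mk s (φ g x) = Quotient.mk s x := hfixQ x
      have h3 : T (φ g x) = φ g x := hsingt g x h1
      have h4 := hsingle_out (φ g x) h3
      rw [h2] at h4
      exact h4.symm.trans hxp.symm
    · have hp0 : Quotient.mk s ((Quotient.mk s x).out) = Quotient.mk s x := hout _
      have hcolp : col ((Quotient.mk s x).out) = Fin.last (m + 1) := by
        rw [hcol_eval _ _ hp0, hFc, if_neg hs, if_pos rfl]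
      have hc1 : col (φ g ((Quotient.mk s x).out)) = Fin.last (m + 1) :=
        (hpres _).trans hcolp
      have hmem1 : Quotient.mk s (φ g ((Quotient.mk s x).out)) = Quotient.mk s x :=
        (hfixQ _).trans hp0
      have hgp : φ g ((Quotient.mk s x).out) = (Quotient.mk s x).out := by
        rw [hcol_eval _ _ hmem1, hFc] at hc1
        split_ifs at hc1 with ha hb
        · exact ha
        · exact absurd hc1 (hcs_ne_last _)
        · exact absurd hc1 hzero_ne_last
      by_cases h2p : T (T ((Quotient.mk s x).out)) = (Quotient.mk s x).out
      · -- orbits with two elements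
        have hTT : (T ^ (2 : ℤ)) ((Quotient.mk s x).out) = (Quotient.mk s x).out := by
          rw [zpow_two, Equiv.Perm.mul_apply, h2p]
        have hmod : ∀ w : ℤ, (T ^ w) ((Quotient.mk s x).out)
            = (T ^ (w % 2)) ((Quotient.mk s x).out) := by
          intro w
          conv_lhs => rw [← Int.mul_ediv_add_emod w 2]
          rw [zpow_add, Equiv.Perm.mul_apply, zpow_mul]
          exact fixzpow _ _ (by rw [hcommT 2 (w % 2) ((Quotient.mk s x).out), hTT]) (w / 2)
        have hmem2 : Quotient.mk s (φ g x) = Quotient.mk s x := hfixQ x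
        obtain ⟨w, hw⟩ : ∃ w : ℤ, (T ^ w) ((Quotient.mk s x).out) = φ g x :=
          hrel (hp0.trans hmem2.symm)
        have h9 : φ g x = (T ^ (w % 2)) ((Quotient.mk s x).out) := by
          have h0 := hmod w
          rw [hw] at h0
          exact h0
        have hx9 : x = (T ^ (n % 2)) ((Quotient.mk s x).out) := by
          have h0 := hmod n
          rw [hn] at h0
          exact h0
        obtain hr | hr := Int.emod_two_eq n
        · rw [hr] at hx9
          simp only [zpow_zero, Equiv.Perm.one_apply] at hx9
          rw [hx9]
          exact hgp
        · rw [hr] at hx9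
          simp only [zpow_one] at hx9
          obtain hw2 | hw2 := Int.emod_two_eq w
          · rw [hw2] at h9
            simp only [zpow_zero, Equiv.Perm.one_apply] at h9
            exfalso
            have h10 : φ g x = φ g ((Quotient.mk s x).out) := by rw [h9, hgp]
            have h11 := (φ g).injective h10
            exact hs (hx9.symm.trans h11)
          · rw [hw2] at h9
            simp only [zpow_one] at h9
            rw [h9, ← hx9]
      · -- orbits with at least three elements (or infinite)
        by_cases hm0 : m = 0
        · subst hm0
          have hg1 : g ∈ K (k + 1) := hall g
          obtain ⟨z₀, hz₀⟩ := himg g hg1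
          rw [hz₀, ← hn, hcommT]
          congr 1
          rw [← hz₀]
          exact hgp
        · obtain ⟨Q₁, hs₁, hv₁⟩ : ∃ Q₁, sameG (Quotient.mk s x) Q₁ ∧ colP' Q₁ ≠ 0 := by
            by_cases hbc : ∀ Q', sameG (Quotient.mk s x) Q' → colP Q' = 0
            · refine ⟨Quotient.mk s x, hsame_refl _, ?_⟩
              rw [hcolP'def, if_pos hbc]
              intro h0
              have := congrArg Fin.val h0
              simp only [oneF, Fin.val_zero] at this
              rw [Nat.mod_eq_of_lt (by omega)] at this
              omega
            · obtain ⟨Q₁, hQ⟩ := not_forall.mp hbc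
              obtain ⟨hsg, hnz⟩ := Classical.not_imp.mp hQ
              refine ⟨Q₁, hsg, ?_⟩
              rw [hcolP'def, if_neg (fun hball => hnz (hball Q₁ (hsame_refl Q₁)))]
              exact hnz
          obtain ⟨g₁, hg₁⟩ := hs₁
          have hp₁ : Quotient.mk s Q₁.out = Q₁ := hout _
          have hy' : φbar g₁⁻¹ Q₁ = Quotient.mk s x := by
            rw [map_inv, ← hg₁, Equiv.Perm.inv_apply_self]
          have hyQ : Quotient.mk s (φ g₁⁻¹ Q₁.out) = Quotient.mk s x := by
            rw [← hbar_mk, hp₁, hy']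
          have hnsp₁ : T Q₁.out ≠ Q₁.out := by
            intro hTp₁
            have hy2 : T (φ g₁⁻¹ Q₁.out) = φ g₁⁻¹ Q₁.out := hsingt g₁⁻¹ _ hTp₁
            have h3 := hsingle_out _ hy2
            rw [hyQ] at h3
            apply hs
            rw [h3]
            exact hy2
          have hQ₁fix : φbar g Q₁ = Q₁ := hfixQ' Q₁
          have hcolp₁ : col Q₁.out = Fin.last (m + 1) := by
            rw [hcol_eval _ _ hp₁, hFc, if_neg hnsp₁, if_pos rfl]
          have hc2 : col (φ g Q₁.out) = Fin.last (m + 1) := (hpres _).trans hcolp₁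
          have hmem2 : Quotient.mk s (φ g Q₁.out) = Q₁ := by
            rw [← hbar_mk, hp₁, hQ₁fix]
          have hσp₁ : φ g Q₁.out = Q₁.out := by
            rw [hcol_eval _ _ hmem2, hFc] at hc2
            split_ifs at hc2 with ha hb hc
            · exact absurd ha hnsp₁
            · exact hb
            · exact absurd hc2 (hcs_ne_last _)
            · exact absurd hc2 hzero_ne_last
          have hTp₁Q : Quotient.mk s (T Q₁.out) = Q₁ := (hTQ _).trans hp₁
          have hcolTp₁ : col (T Q₁.out) = (colP' Q₁).castSucc := by
            rw [hcol_eval _ _ hTp₁Q, hFc, if_neg hnsp₁, if_neg hnsp₁, if_pos rfl]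
          have hc3 : col (φ g (T Q₁.out)) = (colP' Q₁).castSucc := (hpres _).trans hcolTp₁
          have hmem3 : Quotient.mk s (φ g (T Q₁.out)) = Q₁ := by
            rw [← hbar_mk, hTp₁Q, hQ₁fix]
          have hσTp₁ : φ g (T Q₁.out) = T Q₁.out := by
            rw [hcol_eval _ _ hmem3, hFc] at hc3
            split_ifs at hc3 with ha hb hc
            · exact absurd ha hnsp₁
            · exact absurd hc3.symm (hcs_ne_last _)
            · exact hc
            · exact absurd (hcs_zero _ hc3.symm) hv₁
          obtain ⟨w, hw⟩ := hconj g
          have hTw : (T ^ w) Q₁.out = T Q₁.out := by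
            have h8 := congrArg (fun π : Equiv.Perm X => π Q₁.out) hw
            simp only [Equiv.Perm.mul_apply] at h8
            have hinv : (φ g)⁻¹ Q₁.out = Q₁.out := by
              conv_lhs => rw [← hσp₁]
              exact Equiv.Perm.inv_apply_self _ _
            rw [hinv, hσTp₁] at h8
            exact h8.symm
          have hR : (T ^ (w - 1)) Q₁.out = Q₁.out := by
            have h9 : T ^ (w - 1) = T⁻¹ * T ^ w := by
              rw [← zpow_neg_one, ← zpow_add]
              congr 1
              omega
            rw [h9, Equiv.Perm.mul_apply, hTw, Equiv.Perm.inv_apply_self]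
          have hRy : (T ^ (w - 1)) (φ g₁⁻¹ Q₁.out) = φ g₁⁻¹ Q₁.out :=
            hstab (w - 1) g₁⁻¹ _ hR
          obtain ⟨s₀, hs₀⟩ : ∃ z : ℤ, (T ^ z) ((Quotient.mk s x).out) = φ g₁⁻¹ Q₁.out :=
            hrel ((hout _).trans hyQ.symm)
          have hRp : (T ^ (w - 1)) ((Quotient.mk s x).out) = (Quotient.mk s x).out := by
            have h10 : (T ^ (w - 1)) ((T ^ s₀) ((Quotient.mk s x).out))
                = (T ^ s₀) ((Quotient.mk s x).out) := by
              rw [hs₀]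
              exact hRy
            rw [hcommT] at h10
            exact (T ^ s₀).injective h10
          have hconj_n : φ g * T ^ n * (φ g)⁻¹ = T ^ (w * n) := by
            have h11 := map_zpow (MulAut.conj (φ g)) T n
            simp only [MulAut.conj_apply] at h11
            rw [hw, ← zpow_mul] at h11
            exact h11
          have h12 : φ g x = (T ^ (w * n)) ((Quotient.mk s x).out) := by
            have h13 := congrArg (fun π : Equiv.Perm X => π ((Quotient.mk s x).out)) hconj_n
            simp only [Equiv.Perm.mul_apply] at h13
            have hinv : (φ g)⁻¹ ((Quotient.mk s x).out) = (Quotient.mk s x).out := by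
              conv_lhs => rw [← hgp]
              exact Equiv.Perm.inv_apply_self _ _
            rw [hinv, hn] at h13
            exact h13
          rw [h12]
          have h13 : w * n = n + (w - 1) * n := by ring
          rw [h13, zpow_add, Equiv.Perm.mul_apply, zpow_mul,
            fixzpow _ _ hRp n, hn]

/-- If `G` is supersolvable of length `c`, i.e. it has a finite normal series
`1 = H 0 ⊴ H 1 ⊴ ⋯ ⊴ H c = G` (each term normal in `G`) with all successive quotients
cyclic, then every faithful action of `G` on any set `X` admits a distinguishing
`(c+1)`-coloring. Faithful actions are encoded as injective homomorphisms into the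
permutation group. -/
theorem distinguishing_of_supersolvable {G : Type*} [Group G] (c : ℕ)
    (H : Fin (c + 1) → Subgroup G)
    (hnorm : ∀ i, (H i).Normal)
    (hmono : Monotone H)
    (h0 : H 0 = ⊥) (htop : H (Fin.last c) = ⊤)
    (hquot : ∀ i : Fin c,
      haveI := hnorm i.castSucc
      IsCyclic ((H i.succ).map (QuotientGroup.mk' (H i.castSucc)))) :
    ∀ (X : Type*) (φ : G →* Equiv.Perm X), Function.Injective φ →
      ∃ col : X → Fin (c + 1), ∀ g : G, (∀ x : X, col (φ g x) = col x) → g = 1 := by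
  intro X φ hinj
  classical
  let K : ℕ → Subgroup G := fun i => H ⟨min i c, by omega⟩
  have hKnorm : ∀ i, (K i).Normal := fun i => hnorm _
  have hKcyc : ∀ i : ℕ, ∃ τ ∈ K (i + 1), ∀ h ∈ K (i + 1), ∃ z : ℤ, τ ^ z * h⁻¹ ∈ K i := by
    intro i
    by_cases hi : i < c
    · have e1 : K i = H ((⟨i, hi⟩ : Fin c).castSucc) := by
        show H _ = H _
        congr 1
        apply Fin.ext
        simp [Nat.min_eq_left hi.le]
      have e2 : K (i + 1) = H ((⟨i, hi⟩ : Fin c).succ) := by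
        show H _ = H _
        congr 1
        apply Fin.ext
        simp [Nat.min_eq_left (by omega : i + 1 ≤ c)]
      haveI hNi := hnorm ((⟨i, hi⟩ : Fin c).castSucc)
      obtain ⟨y, hy⟩ := (hquot ⟨i, hi⟩).exists_generator
      obtain ⟨τ, hτm, hτe⟩ := Subgroup.mem_map.mp y.2
      refine ⟨τ, by rw [e2]; exact hτm, ?_⟩
      intro h hh
      rw [e2] at hh
      have hmem : (QuotientGroup.mk' (H ((⟨i, hi⟩ : Fin c).castSucc))) h ∈
          (H ((⟨i, hi⟩ : Fin c).succ)).map (QuotientGroup.mk' (H ((⟨i, hi⟩ : Fin c).castSucc))) :=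
        Subgroup.mem_map.mpr ⟨h, hh, rfl⟩
      obtain ⟨z, hz⟩ := Subgroup.mem_zpowers_iff.mp (hy ⟨_, hmem⟩)
      refine ⟨z, ?_⟩
      rw [e1]
      have hval := congrArg (Subtype.val) hz
      rw [SubgroupClass.coe_zpow] at hval
      -- hval : (↑y) ^ z = mk' h
      have hz' : (QuotientGroup.mk' (H ((⟨i, hi⟩ : Fin c).castSucc))) (τ ^ z * h⁻¹) = 1 := by
        rw [map_mul, map_inv, map_zpow, hτe, hval]
        simp
      rw [QuotientGroup.mk'_apply] at hz'
      exact (QuotientGroup.eq_one_iff _).mp hz'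
    · have e : K (i + 1) = K i := by
        show H _ = H _
        congr 1
        apply Fin.ext
        simp [Nat.min_eq_right (by omega : c ≤ i), Nat.min_eq_right (by omega : c ≤ i + 1)]
      refine ⟨1, (K (i + 1)).one_mem, fun h hh => ⟨0, ?_⟩⟩
      rw [zpow_zero, one_mul]
      exact (K i).inv_mem (by rwa [e] at hh)
  have h1 : ∀ h ∈ K 0, φ h = 1 := by
    intro h hh
    have e : K 0 = ⊥ := by
      show H _ = ⊥
      rw [← h0]
      congr 1
    rw [e] at hh
    rw [Subgroup.mem_bot.mp hh, map_one]
  have h2 : ∀ g : G, g ∈ K (0 + c) := by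
    intro g
    have e : K (0 + c) = ⊤ := by
      show H _ = ⊤
      rw [← htop]
      congr 1
      apply Fin.ext
      simp [Fin.val_last]
    rw [e]
    trivial
  obtain ⟨col, hcol⟩ := key K hKnorm hKcyc c X φ 0 h1 h2
  exact ⟨col, fun g hg => hinj (by rw [hcol g hg, map_one])⟩
end

section
/- Let G be a metacyclic group, i.e., G has a normal subgroup N such that both N and G/N are cyclic. Then for every set X and every faithful action of G on X there exists a distinguishing 3-coloring of X. -/
/-!
Write `N = ⟨a⟩` and fix a representative `r` of every `G`-orbit. If `a` fixes `r` (hence the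
whole orbit), colour `r` alone with `2`; otherwise colour with `2` one point of every
`N`-orbit, `r` among them, and colour `a • r` alone with `1`. A colour-preserving `g` fixes
`a • r`; as `G/N` is abelian, it then maps every `N`-orbit to itself and so fixes the points
coloured `2`. Thus `⁅a⁻¹, g⁆ ∈ N` fixes `r`, hence the whole orbit of `r`, because conjugation
acts on the cyclic normal subgroup `N` by a power map. By faithfulness `g` commutes with `N`,
and an element commuting with `N` and fixing a point of every `N`-orbit is the identity.
-/

open MulAction Subgroup
open scoped commutatorElement

section OrbitRep

variable (G : Type*) {X : Type*} [Group G] [MulAction G X]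

noncomputable def orbitRep (x : X) : X :=
  (Quotient.mk (orbitRel G X) x).out

variable {G}

theorem orbitRep_mem_orbit (x : X) : orbitRep G x ∈ orbit G x :=
  orbitRel_apply.mp (Quotient.mk_out x)

theorem orbitRep_eq_of_mem_orbit {x y : X} (h : y ∈ orbit G x) : orbitRep G y = orbitRep G x :=
  congrArg Quotient.out (Quotient.sound (orbitRel_apply.mpr h))

theorem orbitRep_orbitRep (x : X) : orbitRep G (orbitRep G x) = orbitRep G x :=
  orbitRep_eq_of_mem_orbit (orbitRep_mem_orbit x)

open Classical in
/-- A representative of the `N`-orbit of `x`, chosen to be `orbitRep G x` whenever possible. -/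
noncomputable def subOrbitRep (N : Subgroup G) (x : X) : X :=
  if orbitRep G x ∈ orbit N x then orbitRep G x else orbitRep N x

variable {N : Subgroup G}

theorem subOrbitRep_mem_orbit (x : X) : subOrbitRep N x ∈ orbit N x := by
  unfold subOrbitRep
  split_ifs with h
  · exact h
  · exact orbitRep_mem_orbit x

theorem subOrbitRep_eq_of_mem_orbit {x y : X} (h : y ∈ orbit N x) :
    subOrbitRep N y = subOrbitRep N x := by
  have hG : orbitRep G y = orbitRep G x :=
    orbitRep_eq_of_mem_orbit (mem_orbit_of_mem_orbit_subgroup h)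
  rw [subOrbitRep, subOrbitRep, hG, orbit_eq_iff.mpr h, orbitRep_eq_of_mem_orbit h]

theorem subOrbitRep_orbitRep (x : X) : subOrbitRep N (orbitRep G x) = orbitRep G x := by
  rw [subOrbitRep, orbitRep_orbitRep, if_pos (mem_orbit_self _)]

end OrbitRep

section CyclicNormal

variable {G X : Type*} [Group G] [MulAction G X] {a : G}

theorem eq_of_mem_orbit_zpowers {x y : X} (hx : a • x = x) (hy : y ∈ orbit (zpowers a) x) :
    y = x := by
  obtain ⟨⟨_, k, rfl⟩, rfl⟩ := hy
  exact mem_fixedBy_zpow (α := X) hx k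

variable [(zpowers a).Normal]

theorem exists_conj_eq_zpow (p : G) : ∃ t : ℤ, ∀ n ∈ zpowers a, p⁻¹ * n * p = n ^ t := by
  have hconj : p⁻¹ * a * p ∈ zpowers a := by
    simpa using Normal.conj_mem inferInstance a (mem_zpowers a) p⁻¹
  obtain ⟨t, ht⟩ := mem_zpowers_iff.mp hconj
  refine ⟨t, fun n hn => ?_⟩
  obtain ⟨k, rfl⟩ := mem_zpowers_iff.mp hn
  have hk : (p⁻¹ * a * p) ^ k = p⁻¹ * a ^ k * p := by
    simpa using conj_zpow (a := p⁻¹) (b := a) (i := k)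
  rw [← hk, ← ht, ← zpow_mul, ← zpow_mul, mul_comm]

theorem smul_mem_fixedBy {n : G} (hn : n ∈ zpowers a) {x : X} (hx : x ∈ fixedBy X n) (p : G) :
    p • x ∈ fixedBy X n := by
  obtain ⟨t, ht⟩ := exists_conj_eq_zpow (a := a) p
  have h : n * p = p * n ^ t := by rw [← ht n hn]; group
  rw [mem_fixedBy, smul_smul, h, mul_smul, mem_fixedBy_zpow hx t]

theorem mem_fixedBy_iff_of_mem_orbit {n : G} (hn : n ∈ zpowers a) {x y : X}
    (hy : y ∈ orbit G x) : y ∈ fixedBy X n ↔ x ∈ fixedBy X n := by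
  obtain ⟨p, rfl⟩ := hy
  exact ⟨fun h => by simpa using smul_mem_fixedBy hn h p⁻¹, fun h => smul_mem_fixedBy hn h p⟩

end CyclicNormal

section CommutatorLe

variable {G X : Type*} [Group G] [MulAction G X] {N : Subgroup G} [hN : N.Normal]

theorem smul_mem_orbit_of_commutator_le (hGN : commutator G ≤ N) {g : G} {y : X}
    (hy : g • y ∈ orbit N y) {x : X} (hx : x ∈ orbit G y) : g • x ∈ orbit N x := by
  obtain ⟨⟨n, hn⟩, hny⟩ := hy
  obtain ⟨p, rfl⟩ := hx
  have hc : ⁅g⁻¹, p⁻¹⁆ ∈ N := hGN (commutator_mem_commutator (mem_top _) (mem_top _))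
  have hk : p * (g * ⁅g⁻¹, p⁻¹⁆ * g⁻¹ * n) * p⁻¹ ∈ N :=
    hN.conj_mem _ (mul_mem (hN.conj_mem _ hc g) hn) p
  refine ⟨⟨_, hk⟩, ?_⟩
  simp only [subgroup_smul_def] at hny ⊢
  calc (p * (g * ⁅g⁻¹, p⁻¹⁆ * g⁻¹ * n) * p⁻¹) • p • y
      = (p * (g * ⁅g⁻¹, p⁻¹⁆ * g⁻¹)) • n • y := by simp only [smul_smul]; group
    _ = g • p • y := by rw [hny, smul_smul, smul_smul, commutatorElement_def]; group

end CommutatorLe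

section Faithful

variable {G X : Type*} [Group G] [MulAction G X] [FaithfulSMul G X] {a g : G}

theorem commute_of_smul_orbitRep_eq [(zpowers a).Normal]
    (h₁ : ∀ x : X, g • orbitRep G x = orbitRep G x)
    (h₂ : ∀ x : X, g • a • orbitRep G x = a • orbitRep G x) : Commute a g := by
  have hmem : ⁅a⁻¹, g⁆ ∈ zpowers a := by
    rw [show ⁅a⁻¹, g⁆ = a⁻¹ * (g * a * g⁻¹) by rw [commutatorElement_def]; group]
    exact mul_mem (inv_mem (mem_zpowers a)) (Normal.conj_mem ‹_› a (mem_zpowers a) g)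
  have hfix (x : X) : ⁅a⁻¹, g⁆ • x = x := by
    have hrep : orbitRep G x ∈ fixedBy X ⁅a⁻¹, g⁆ := by
      rw [mem_fixedBy, commutatorElement_def, inv_inv, mul_smul, mul_smul, mul_smul,
        inv_smul_eq_iff.mpr (h₁ x).symm, h₂, inv_smul_smul]
    obtain ⟨p, hp⟩ := mem_orbit_symm.mp (orbitRep_mem_orbit (G := G) x)
    exact hp ▸ smul_mem_fixedBy hmem hrep p
  rw [← Commute.inv_left_iff, ← commutatorElement_eq_one_iff_commute]
  exact eq_of_smul_eq_smul fun x : X => by rw [hfix, one_smul]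

theorem eq_one_of_commute_of_smul_subOrbitRep_eq (hcomm : Commute a g)
    (h : ∀ x : X, g • subOrbitRep (zpowers a) x = subOrbitRep (zpowers a) x) : g = 1 := by
  refine eq_of_smul_eq_smul fun x : X => ?_
  obtain ⟨⟨_, k, rfl⟩, hk⟩ := mem_orbit_symm.mp (subOrbitRep_mem_orbit (N := zpowers a) x)
  simp only [subgroup_smul_def] at hk
  calc g • x = g • a ^ k • subOrbitRep (zpowers a) x := by rw [hk]
    _ = a ^ k • g • subOrbitRep (zpowers a) x := by
      rw [smul_smul, smul_smul, (hcomm.zpow_left k).eq]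
    _ = (1 : G) • x := by rw [h, hk, one_smul]

end Faithful

section Coloring

variable {G X : Type*} [Group G] [MulAction G X] {a : G}

open Classical in
noncomputable def metacyclicColoring (a : G) (x : X) : Fin 3 :=
  if x = subOrbitRep (zpowers a) x ∧ (a • x = x → x = orbitRep G x) then 2
  else if x = a • orbitRep G x then 1 else 0

theorem metacyclicColoring_eq_two_iff {x : X} :
    metacyclicColoring a x = 2 ↔
      x = subOrbitRep (zpowers a) x ∧ (a • x = x → x = orbitRep G x) := by
  unfold metacyclicColoring
  split_ifs with h2 h1
  · exact iff_of_true rfl h2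
  · exact iff_of_false (by decide) h2
  · exact iff_of_false (by decide) h2

theorem metacyclicColoring_eq_one_iff {x : X} :
    metacyclicColoring a x = 1 ↔
      ¬(x = subOrbitRep (zpowers a) x ∧ (a • x = x → x = orbitRep G x)) ∧
        x = a • orbitRep G x := by
  unfold metacyclicColoring
  split_ifs with h2 h1
  · exact iff_of_false (by decide) fun h => h.1 h2
  · exact iff_of_true rfl ⟨h2, h1⟩
  · exact iff_of_false (by decide) fun h => h1 h.2

variable [(zpowers a).Normal]

theorem eq_smul_orbitRep_of_metacyclicColoring_eq {x y : X} (hy : y ∈ orbit G x)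
    (h : metacyclicColoring a y = metacyclicColoring a (a • orbitRep G x)) :
    y = a • orbitRep G x := by
  have hry : orbitRep G y = orbitRep G x := orbitRep_eq_of_mem_orbit hy
  have hfix : a • y = y ↔ a • orbitRep G x = orbitRep G x :=
    mem_fixedBy_iff_of_mem_orbit (mem_zpowers a)
      (by rwa [orbit_eq_iff.mpr (orbitRep_mem_orbit x)] : y ∈ orbit G (orbitRep G x))
  by_cases hr : a • orbitRep G x = orbitRep G x
  · have h2 : metacyclicColoring a (orbitRep G x) = 2 :=
      metacyclicColoring_eq_two_iff.mpr
        ⟨(subOrbitRep_orbitRep x).symm, fun _ => (orbitRep_orbitRep x).symm⟩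
    rw [hr, h2, metacyclicColoring_eq_two_iff] at h
    rw [hr, h.2 (hfix.mpr hr), hry]
  · have ha : a • orbitRep G x ∈ orbit (zpowers a) (orbitRep G x) :=
      mem_orbit _ (⟨a, mem_zpowers a⟩ : zpowers a)
    have hs : subOrbitRep (zpowers a) (a • orbitRep G x) = orbitRep G x := by
      rw [subOrbitRep_eq_of_mem_orbit ha, subOrbitRep_orbitRep]
    have h1 : metacyclicColoring a (a • orbitRep G x) = 1 := by
      refine metacyclicColoring_eq_one_iff.mpr ⟨fun h2 => hr (h2.1.trans hs), ?_⟩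
      rw [orbitRep_eq_of_mem_orbit (mem_orbit _ a), orbitRep_orbitRep]
    rw [h1, metacyclicColoring_eq_one_iff, hry] at h
    exact h.2

theorem eq_subOrbitRep_of_metacyclicColoring_eq {x y : X} (hy : y ∈ orbit (zpowers a) x)
    (h : metacyclicColoring a y = metacyclicColoring a (subOrbitRep (zpowers a) x)) :
    y = subOrbitRep (zpowers a) x := by
  have hsx : subOrbitRep (zpowers a) x ∈ orbit (zpowers a) x := subOrbitRep_mem_orbit x
  by_cases hx : a • x = x
  · rw [eq_of_mem_orbit_zpowers hx hy, eq_of_mem_orbit_zpowers hx hsx]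
  · have hsfix : ¬a • subOrbitRep (zpowers a) x = subOrbitRep (zpowers a) x := fun h =>
      hx ((mem_fixedBy_iff_of_mem_orbit (mem_zpowers a)
        (mem_orbit_of_mem_orbit_subgroup hsx)).mp h)
    have h2 : metacyclicColoring a (subOrbitRep (zpowers a) x) = 2 :=
      metacyclicColoring_eq_two_iff.mpr
        ⟨(subOrbitRep_eq_of_mem_orbit hsx).symm, fun h => absurd h hsfix⟩
    rw [h2, metacyclicColoring_eq_two_iff, subOrbitRep_eq_of_mem_orbit hy] at h
    exact h.1

end Coloring

theorem eq_one_of_forall_metacyclicColoring_smul_eq {G X : Type*} [Group G] [MulAction G X]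
    [FaithfulSMul G X] {a : G} [(zpowers a).Normal] (hGN : commutator G ≤ zpowers a) {g : G}
    (hg : ∀ x : X, metacyclicColoring a (g • x) = metacyclicColoring a x) : g = 1 := by
  have hmark (x : X) : g • a • orbitRep G x = a • orbitRep G x :=
    eq_smul_orbitRep_of_metacyclicColoring_eq
      (mem_orbit_of_mem_orbit g (mem_orbit_of_mem_orbit a (orbitRep_mem_orbit x))) (hg _)
  have horbit (x : X) : g • x ∈ orbit (zpowers a) x :=
    smul_mem_orbit_of_commutator_le hGN (by rw [hmark]; exact mem_orbit_self _)
      (mem_orbit_symm.mp (mem_orbit_of_mem_orbit a (orbitRep_mem_orbit x)))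
  have hsub (x : X) : g • subOrbitRep (zpowers a) x = subOrbitRep (zpowers a) x := by
    refine eq_subOrbitRep_of_metacyclicColoring_eq ?_ (hg _)
    rw [← orbit_eq_iff.mpr (subOrbitRep_mem_orbit x)]
    exact horbit _
  have hrep (x : X) : g • orbitRep G x = orbitRep G x := by
    simpa only [subOrbitRep_orbitRep] using hsub (orbitRep G x)
  exact eq_one_of_commute_of_smul_subOrbitRep_eq (commute_of_smul_orbitRep_eq hrep hmark) hsub

/-- If `G` is metacyclic, i.e. it has a normal subgroup `N` with both `N` and `G/N` cyclic,
then every faithful action of `G` on any set `X` admits a distinguishing `3`-coloring.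
Faithful actions are encoded as injective homomorphisms into the permutation group. -/
theorem distinguishing_of_metacyclic {G : Type*} [Group G] (N : Subgroup G) [N.Normal]
    (hN : IsCyclic N) (hQ : IsCyclic (G ⧸ N)) :
    ∀ (X : Type*) (φ : G →* Equiv.Perm X), Function.Injective φ →
      ∃ col : X → Fin 3, ∀ g : G, (∀ x : X, col (φ g x) = col x) → g = 1 := by
  intro X φ hφ
  obtain ⟨a, rfl⟩ := N.isCyclic_iff_exists_zpowers_eq_top.mp hN
  let _ : MulAction G X := MulAction.compHom X φ
  have _ : FaithfulSMul G X := ⟨fun h => hφ (Equiv.ext h)⟩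
  have hGN : commutator G ≤ zpowers a :=
    Normal.quotient_commutative_iff_commutator_le.mp hQ.isMulCommutative
  exact ⟨metacyclicColoring a, fun g hg => eq_one_of_forall_metacyclicColoring_smul_eq hGN hg⟩
end

section
/- Let G be a finite group of squarefree order. Then for every set X and every faithful action of G on X there exists a distinguishing 3-coloring of X. -/
open Subgroup
open scoped commutatorElement

-- L0: MulAut of a cyclic group is commutative
theorem mulAut_comm_of_isCyclic {H : Type*} [Group H] [IsCyclic H] (f g : MulAut H) :
    f * g = g * f := by
  obtain ⟨h₀, hh₀⟩ := IsCyclic.exists_generator (α := H)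
  obtain ⟨m, hm⟩ := hh₀ (f h₀)
  obtain ⟨n, hn⟩ := hh₀ (g h₀)
  ext x
  obtain ⟨k, hk⟩ := hh₀ x
  simp only at hm hn
  subst hk
  have e1 : f (g h₀) = h₀ ^ (n * m) := by rw [← hn, map_zpow, ← hm, ← zpow_mul, mul_comm]
  have e2 : g (f h₀) = h₀ ^ (m * n) := by rw [← hm, map_zpow, ← hn, ← zpow_mul, mul_comm]
  simp only [MulAut.mul_apply, map_zpow, e1, e2, mul_comm]

-- L3 helper
theorem sq_dvd_helper {n m : ℕ} (hn : Squarefree n) (hmn : m ∣ n)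
    (h : ∀ p : ℕ, p.Prime → p ∣ n → p ∣ m) : n = m := by
  obtain ⟨k, hk⟩ := hmn
  by_cases hk1 : k = 1
  · simp [hk, hk1]
  have hk0 : k ≠ 0 := by
    rintro rfl
    rw [hk, mul_zero] at hn
    exact hn.ne_zero rfl
  exfalso
  have hr : (Nat.minFac k).Prime := Nat.minFac_prime hk1
  have h1 : Nat.minFac k ∣ n := hk ▸ Dvd.dvd.mul_left (Nat.minFac_dvd k) m
  have h2 := h _ hr h1
  have : (Nat.minFac k) * (Nat.minFac k) ∣ n := by
    rw [hk]; exact mul_dvd_mul h2 (Nat.minFac_dvd k)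
  exact hr.not_isUnit (hn _ this)

-- L3: finite abelian group of squarefree order is cyclic
theorem isCyclic_of_squarefree_comm {H : Type*} [CommGroup H] [Finite H]
    (h : Squarefree (Nat.card H)) : IsCyclic H := by
  apply IsCyclic.of_exponent_eq_card
  refine (sq_dvd_helper h Group.exponent_dvd_nat_card ?_).symm
  intro p hp hdvd
  have := Fact.mk hp
  obtain ⟨g, hg⟩ := exists_prime_orderOf_dvd_card' p hdvd
  exact hg ▸ Monoid.order_dvd_exponent g

-- L1: Burnside: normal complement for the smallest prime
theorem exists_normal_compl (G : Type*) [Group G] [Finite G] (hsf : Squarefree (Nat.card G))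
    (h1 : 1 < Nat.card G) :
    ∃ K : Subgroup G, K.Normal ∧ Nat.card K * (Nat.card G).minFac = Nat.card G := by
  have hp : (Nat.card G).minFac.Prime := Nat.minFac_prime (by omega)
  have := Fact.mk hp
  obtain ⟨P⟩ : Nonempty (Sylow (Nat.card G).minFac G) := inferInstance
  have hcardP : Nat.card P = (Nat.card G).minFac := by
    rw [P.card_eq_multiplicity]
    have h1' : (Nat.card G).factorization (Nat.card G).minFac ≤ 1 :=
      hsf.natFactorization_le_one _
    have h2' : 1 ≤ (Nat.card G).factorization (Nat.card G).minFac :=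
      Nat.Prime.factorization_pos_of_dvd hp (by omega) (Nat.card G).minFac_dvd
    rw [show (Nat.card G).factorization (Nat.card G).minFac = 1 by omega, pow_one]
  haveI : Finite (MulAut P) :=
    Finite.of_injective (fun f => f.toEquiv) MulEquiv.toEquiv_injective
  have hPcyc : IsCyclic P := isCyclic_of_prime_card hcardP
  have hcardAut : Nat.card (MulAut P) = (Nat.card G).minFac - 1 := by
    rw [IsCyclic.card_mulAut, hcardP, Nat.totient_prime hp]
  have hcop : Nat.Coprime (Nat.card G) ((Nat.card G).minFac - 1) := by
    by_contra hc
    have hd1 : Nat.gcd (Nat.card G) ((Nat.card G).minFac - 1) ≠ 1 := hc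
    have hd0 : Nat.gcd (Nat.card G) ((Nat.card G).minFac - 1) ≠ 0 := by
      intro h0
      have h00 := Nat.eq_zero_of_gcd_eq_zero_left h0
      omega
    have hr : (Nat.gcd (Nat.card G) ((Nat.card G).minFac - 1)).minFac.Prime :=
      Nat.minFac_prime hd1
    have hrn : (Nat.gcd (Nat.card G) ((Nat.card G).minFac - 1)).minFac ∣ Nat.card G :=
      (Nat.minFac_dvd _).trans (Nat.gcd_dvd_left _ _)
    have hrp : (Nat.gcd (Nat.card G) ((Nat.card G).minFac - 1)).minFac ∣
        (Nat.card G).minFac - 1 := (Nat.minFac_dvd _).trans (Nat.gcd_dvd_right _ _)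
    have h2 : (Nat.card G).minFac ≤ (Nat.gcd (Nat.card G) ((Nat.card G).minFac - 1)).minFac :=
      Nat.minFac_le_of_dvd hr.two_le hrn
    have h3 : (Nat.gcd (Nat.card G) ((Nat.card G).minFac - 1)).minFac ≤
        (Nat.card G).minFac - 1 := Nat.le_of_dvd (by have := hp.two_le; omega) hrp
    have h4 := hp.two_le
    omega
  have hP : Subgroup.normalizer ((P : Subgroup G) : Set G) ≤ Subgroup.centralizer (P : Set G) := by
    intro g hg
    set σ := Subgroup.normalizerMonoidHom (P : Subgroup G) ⟨g, hg⟩ with hσdef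
    have h1' : orderOf σ ∣ (Nat.card G).minFac - 1 :=
      hcardAut ▸ _root_.orderOf_dvd_natCard σ
    have h2' : orderOf σ ∣ Nat.card G := by
      refine dvd_trans (orderOf_map_dvd _ _) ?_
      exact dvd_trans (_root_.orderOf_dvd_natCard _) (Subgroup.card_subgroup_dvd_card _)
    have hord : orderOf σ = 1 := Nat.eq_one_of_dvd_coprimes hcop h2' h1'
    have hσ1 : σ = 1 := orderOf_eq_one_iff.mp hord
    rw [Subgroup.mem_centralizer_iff]
    intro m hm
    have h5 : σ ⟨m, hm⟩ = ⟨m, hm⟩ := by rw [hσ1]; rfl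
    have h6 : g * m * g⁻¹ = m := congrArg Subtype.val h5
    have h7 : g * m * g⁻¹ * g = m * g := by rw [h6]
    rw [inv_mul_cancel_right] at h7
    exact h7.symm
  refine ⟨(MonoidHom.transferSylow P hP).ker, inferInstance, ?_⟩
  have hcompl := MonoidHom.ker_transferSylow_isComplement' P hP
  have hcm := hcompl.card_mul
  rw [hcardP] at hcm
  exact hcm

-- L2: normal subgroup of order the largest prime
theorem exists_normal_maxprime (n : ℕ) : ∀ (G : Type*) [Group G] [Finite G],
    Nat.card G = n → Squarefree (Nat.card G) → ∀ q : ℕ, q.Prime → q ∣ Nat.card G →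
    (∀ r : ℕ, r.Prime → r ∣ Nat.card G → r ≤ q) →
    ∃ Q : Subgroup G, Q.Normal ∧ Nat.card Q = q := by
  induction n using Nat.strong_induction_on with
  | _ n ih =>
  intro G _ _ hcard hsf q hq hqd hqmax
  have hc0 : Nat.card G ≠ 0 := Nat.card_pos.ne'
  have h1 : 1 < Nat.card G := lt_of_lt_of_le hq.one_lt (Nat.le_of_dvd Nat.card_pos hqd)
  by_cases hpq : (Nat.card G).minFac = q
  · -- card G = q
    obtain ⟨k, hk⟩ := hqd
    have hk1 : k = 1 := by
      by_contra hk1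
      have hk0 : k ≠ 0 := by rintro rfl; rw [hk, mul_zero] at hc0; exact hc0 rfl
      have hr : k.minFac.Prime := Nat.minFac_prime hk1
      have hrd : k.minFac ∣ Nat.card G := hk ▸ Dvd.dvd.mul_left (Nat.minFac_dvd k) q
      have hle : k.minFac ≤ q := hqmax _ hr hrd
      have hge : q ≤ k.minFac := hpq ▸ Nat.minFac_le_of_dvd hr.two_le hrd
      have heq : k.minFac = q := le_antisymm hle hge
      have : q * q ∣ Nat.card G := by
        rw [hk]; exact mul_dvd_mul_left q (heq ▸ Nat.minFac_dvd k)
      exact hq.not_isUnit (hsf _ this)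
    refine ⟨⊤, inferInstance, ?_⟩
    rw [Subgroup.card_top, hk, hk1, mul_one]
  · -- Burnside step
    obtain ⟨K, hKn, hKcard⟩ := exists_normal_compl G hsf h1
    have hp : (Nat.card G).minFac.Prime := Nat.minFac_prime (by omega)
    have hKdvd : Nat.card K ∣ Nat.card G := ⟨(Nat.card G).minFac, hKcard.symm⟩
    have hKsf : Squarefree (Nat.card K) := hsf.squarefree_of_dvd hKdvd
    have hqK : q ∣ Nat.card K := by
      have : q ∣ Nat.card K * (Nat.card G).minFac := by rw [hKcard]; exact hqd
      rcases (Nat.Prime.dvd_mul hq).mp this with h | h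
      · exact h
      · exact absurd ((Nat.prime_dvd_prime_iff_eq hq hp).mp h).symm hpq
    have hKlt : Nat.card K < n := by
      have h2 := hp.two_le
      have hKpos : 0 < Nat.card K := Nat.card_pos
      calc Nat.card K < Nat.card K * (Nat.card G).minFac := by nlinarith
      _ = n := by rw [hKcard, hcard]
    obtain ⟨Q, hQn, hQcard⟩ := ih (Nat.card K) hKlt K rfl hKsf q hq hqK
      (fun r hr hrd => hqmax r hr (hrd.trans hKdvd))
    -- make Q characteristic in K via Sylow
    have := Fact.mk hq
    have hfact : Nat.card Q = q ^ (Nat.card K).factorization q := by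
      have h1' : (Nat.card K).factorization q ≤ 1 := hKsf.natFactorization_le_one _
      have h2' : 1 ≤ (Nat.card K).factorization q :=
        Nat.Prime.factorization_pos_of_dvd hq (by simp [Nat.card_pos.ne']) hqK
      rw [show (Nat.card K).factorization q = 1 by omega, pow_one, hQcard]
    let PQ : Sylow q K := Sylow.ofCard Q hfact
    have hPQn : (PQ : Subgroup K).Normal := by
      rw [Sylow.coe_ofCard]; exact hQn
    have hchar : (PQ : Subgroup K).Characteristic := Sylow.characteristic_of_normal PQ hPQn
    have hchar' : Q.Characteristic := by rwa [Sylow.coe_ofCard] at hchar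
    refine ⟨Q.map K.subtype, ConjAct.normal_of_characteristic_of_normal, ?_⟩
    rw [← hQcard]
    exact Nat.card_congr (Subgroup.equivMapOfInjective Q K.subtype K.subtype_injective).symm.toEquiv

-- L4: for squarefree order groups, the commutator subgroup is cyclic
theorem isCyclic_commutator_of_squarefree (n : ℕ) : ∀ (G : Type*) [Group G] [Finite G],
    Nat.card G = n → Squarefree (Nat.card G) → IsCyclic ↥(commutator G) := by
  induction n using Nat.strong_induction_on with
  | _ n ih =>
  intro G _ _ hcard hsf
  by_cases htriv : Nat.card G = 1
  · have : Subsingleton G := Nat.card_eq_one_iff_unique.mp htriv |>.1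
    infer_instance
  have h1 : 1 < Nat.card G := by have := Nat.card_pos (α := G); omega
  have hne : (Nat.card G).primeFactors.Nonempty := Nat.nonempty_primeFactors.mpr h1
  set q := (Nat.card G).primeFactors.max' hne with hqdef
  have hqmem := (Nat.card G).primeFactors.max'_mem hne
  have hq : q.Prime := Nat.prime_of_mem_primeFactors hqmem
  have hqd : q ∣ Nat.card G := Nat.dvd_of_mem_primeFactors hqmem
  have hqmax : ∀ r : ℕ, r.Prime → r ∣ Nat.card G → r ≤ q := fun r hr hrd =>
    Finset.le_max' _ r (Nat.mem_primeFactors.mpr ⟨hr, hrd, Nat.card_pos.ne'⟩)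
  obtain ⟨Q, hQn, hQq⟩ := exists_normal_maxprime (Nat.card G) G rfl hsf q hq hqd hqmax
  haveI := hQn
  haveI := Fact.mk hq
  have hQcyc : IsCyclic ↥Q := isCyclic_of_prime_card hQq
  have hcardQuot : Nat.card G = Nat.card (G ⧸ Q) * q := by
    rw [← hQq]; exact Subgroup.card_eq_card_quotient_mul_card_subgroup Q
  have hquotdvd : Nat.card (G ⧸ Q) ∣ Nat.card G := ⟨q, hcardQuot⟩
  have hsfQ : Squarefree (Nat.card (G ⧸ Q)) := hsf.squarefree_of_dvd hquotdvd
  have hlt : Nat.card (G ⧸ Q) < n := by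
    rw [← hcard]
    have h2 := hq.two_le
    have hpos : 0 < Nat.card (G ⧸ Q) := Nat.card_pos
    nlinarith [hcardQuot]
  haveI hQuotCyc : IsCyclic ↥(commutator (G ⧸ Q)) := ih _ hlt (G ⧸ Q) rfl hsfQ
  -- the natural map from the commutator subgroup to the quotient
  set f : ↥(commutator G) →* G ⧸ Q := (QuotientGroup.mk' Q).comp (commutator G).subtype with hfdef
  have hfrange : ∀ x : ↥(commutator G), f x ∈ commutator (G ⧸ Q) := by
    intro x
    have hx : f x ∈ (commutator G).map (QuotientGroup.mk' Q) :=
      Subgroup.mem_map.mpr ⟨x.1, x.2, rfl⟩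
    have hle : (commutator G).map (QuotientGroup.mk' Q) ≤ commutator (G ⧸ Q) := by
      rw [commutator_def, Subgroup.map_commutator, commutator_def]
      exact Subgroup.commutator_mono le_top le_top
    exact hle hx
  set f' : ↥(commutator G) →* ↥(commutator (G ⧸ Q)) :=
    f.codRestrict _ hfrange with hf'def
  have hkerf' : ∀ x : ↥(commutator G), f' x = 1 ↔ (x : G) ∈ Q := by
    intro x
    rw [hf'def]
    constructor
    · intro h
      have : f x = 1 := congrArg Subtype.val h
      rwa [hfdef, MonoidHom.comp_apply, ← (QuotientGroup.mk' Q).mem_ker,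
        QuotientGroup.ker_mk'] at this
    · intro h
      ext
      show f x = 1
      rw [hfdef, MonoidHom.comp_apply, ← (QuotientGroup.mk' Q).mem_ker, QuotientGroup.ker_mk']
      exact h
  by_cases hQle : Q ≤ commutator G
  · -- Q is central in the commutator subgroup
    set c : G →* MulAut ↥Q := MulAut.conjNormal with hcdef
    have hcker : commutator G ≤ c.ker := by
      rw [commutator_def, Subgroup.commutator_le]
      intro g _ h _
      rw [MonoidHom.mem_ker, map_commutatorElement]
      exact commutatorElement_eq_one_iff_commute.mpr (mulAut_comm_of_isCyclic _ _)
    have hcenter : f'.ker ≤ Subgroup.center ↥(commutator G) := by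
      intro x hx
      rw [MonoidHom.mem_ker, hkerf'] at hx
      rw [Subgroup.mem_center_iff]
      intro y
      have hy1 : MulAut.conjNormal (y : G) = (1 : MulAut ↥Q) := hcker y.2
      have h5 : MulAut.conjNormal (y : G) (⟨(x : G), hx⟩ : ↥Q) = (⟨(x : G), hx⟩ : ↥Q) := by
        rw [hy1]; rfl
      have this5 : (y : G) * (x : G) * (y : G)⁻¹ = (x : G) := by
        have := congrArg Subtype.val h5
        simpa using this
      have hcomm : (y : G) * (x : G) = (x : G) * (y : G) := by
        have h7 : (y:G) * (x:G) * (y:G)⁻¹ * (y:G) = (x:G) * (y:G) := by rw [this5]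
        rwa [inv_mul_cancel_right] at h7
      exact Subtype.ext (by simpa using hcomm)
    letI : CommGroup ↥(commutator G) := commGroupOfCyclicCenterQuotient f' hcenter
    exact isCyclic_of_squarefree_comm
      (hsf.squarefree_of_dvd (Subgroup.card_subgroup_dvd_card _))
  · -- the commutator subgroup intersects Q trivially and embeds in the quotient
    have hinj : Function.Injective f' := by
      rw [← MonoidHom.ker_eq_bot_iff, Subgroup.eq_bot_iff_forall]
      intro x hx
      rw [MonoidHom.mem_ker, hkerf'] at hx
      by_contra hx1
      -- then Q ⊓ commutator G is nontrivial, hence equals Q, hence Q ≤ commutator G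
      have hmem : (x : G) ∈ Q ⊓ commutator G := ⟨hx, x.2⟩
      have hbot : Q ⊓ commutator G ≠ ⊥ := by
        intro hb
        rw [hb, Subgroup.mem_bot] at hmem
        exact hx1 (Subtype.ext hmem)
      have hdvd : Nat.card ↥(Q ⊓ commutator G) ∣ q := by
        rw [← hQq]
        exact Subgroup.card_dvd_of_le inf_le_left
      rcases (Nat.Prime.eq_one_or_self_of_dvd hq _ hdvd).symm with heq | heq
      · -- card inf = q = card Q, so inf = Q
        have : Q ⊓ commutator G = Q := by
          apply Subgroup.eq_of_le_of_card_ge inf_le_left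
          rw [hQq, heq]
        exact hQle (this ▸ inf_le_right)
      · exact hbot (Subgroup.card_eq_one.mp heq)
    haveI : IsCyclic ↥f'.range := Subgroup.isCyclic _
    exact isCyclic_of_surjective (MonoidHom.ofInjective hinj).symm
      (MulEquiv.surjective _)

-- L5: packaging: normal cyclic subgroup containing all commutators
theorem exists_cyclic_normal_commutator_container (G : Type*) [Group G] [Finite G]
    (hsf : Squarefree (Nat.card G)) :
    ∃ a : G, (Subgroup.zpowers a).Normal ∧ ∀ g h : G, ⁅g, h⁆ ∈ Subgroup.zpowers a := by
  have hc := isCyclic_commutator_of_squarefree (Nat.card G) G rfl hsf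
  obtain ⟨a₀, ha₀⟩ := hc.exists_generator
  have hz : Subgroup.zpowers (a₀ : G) = commutator G := by
    apply le_antisymm
    · rw [Subgroup.zpowers_le]; exact a₀.2
    · intro x hx
      obtain ⟨k, hk⟩ := ha₀ ⟨x, hx⟩
      refine ⟨k, ?_⟩
      have := congrArg Subtype.val hk
      simpa using this
  refine ⟨(a₀ : G), ?_, ?_⟩
  · rw [hz]; infer_instance
  · intro g h
    rw [hz, _root_.commutator_def]
    exact Subgroup.commutator_mem_commutator (Subgroup.mem_top g) (Subgroup.mem_top h)


theorem distinguishing_aux {G : Type*} [Group G] (X : Type*) (φ : G →* Equiv.Perm X)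
    (hφ : Function.Injective φ) (a : G) (hA : (Subgroup.zpowers a).Normal)
    (hcomm : ∀ g h : G, ⁅g, h⁆ ∈ Subgroup.zpowers a) :
    ∃ col : X → Fin 3, ∀ g : G, (∀ x : X, col (φ g x) = col x) → g = 1 := by
  classical
  -- basic action facts
  have mul_apply : ∀ (g h : G) (x : X), φ (g * h) x = φ g (φ h x) := by
    intro g h x; rw [map_mul]; rfl
  have one_apply : ∀ x : X, φ (1 : G) x = x := by
    intro x; rw [map_one]; rfl
  have inv_apply : ∀ (g : G) (x y : X), φ g y = x → φ g⁻¹ x = y := by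
    intro g x y h
    rw [← h, ← mul_apply, inv_mul_cancel, one_apply]
  -- the two orbit equivalence relations
  have hGsymm : ∀ {x y : X}, (∃ h : G, φ h y = x) → ∃ h : G, φ h x = y := by
    rintro x y ⟨h, rfl⟩; exact ⟨h⁻¹, inv_apply h _ _ rfl⟩
  have hGtrans : ∀ {x y z : X}, (∃ h : G, φ h y = x) → (∃ h : G, φ h z = y) →
      ∃ h : G, φ h z = x := by
    rintro x y z ⟨h₁, rfl⟩ ⟨h₂, rfl⟩; exact ⟨h₁ * h₂, mul_apply _ _ _⟩
  have hAsymm : ∀ {x y : X}, (∃ i : ℤ, φ (a ^ i) y = x) → ∃ i : ℤ, φ (a ^ i) x = y := by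
    rintro x y ⟨i, rfl⟩
    refine ⟨-i, ?_⟩
    rw [zpow_neg]
    exact inv_apply _ _ _ rfl
  have hAtrans : ∀ {x y z : X}, (∃ i : ℤ, φ (a ^ i) y = x) → (∃ i : ℤ, φ (a ^ i) z = y) →
      ∃ i : ℤ, φ (a ^ i) z = x := by
    rintro x y z ⟨i, rfl⟩ ⟨j, rfl⟩
    exact ⟨i + j, by rw [zpow_add, mul_apply]⟩
  have hAG : ∀ {x y : X}, (∃ i : ℤ, φ (a ^ i) y = x) → ∃ h : G, φ h y = x := by
    rintro x y ⟨i, rfl⟩; exact ⟨a ^ i, rfl⟩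
  let sG : Setoid X := ⟨fun x y => ∃ h : G, φ h y = x,
    ⟨fun x => ⟨1, one_apply x⟩, hGsymm, hGtrans⟩⟩
  let sA : Setoid X := ⟨fun x y => ∃ i : ℤ, φ (a ^ i) y = x,
    ⟨fun x => ⟨0, by rw [zpow_zero]; exact one_apply x⟩, hAsymm, hAtrans⟩⟩
  let t : X → X := fun x => (Quotient.mk sG x).out
  let r : X → X := fun x => (Quotient.mk sA x).out
  have htG : ∀ x : X, ∃ h : G, φ h x = t x := fun x =>
    Quotient.exact ((Quotient.mk sG x).out_eq)
  have htc : ∀ x y : X, (∃ h : G, φ h y = x) → t x = t y := fun x y hxy =>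
    congrArg Quotient.out (Quotient.sound hxy)
  have hrA : ∀ x : X, ∃ i : ℤ, φ (a ^ i) x = r x := fun x =>
    Quotient.exact ((Quotient.mk sA x).out_eq)
  have hrc : ∀ x y : X, (∃ i : ℤ, φ (a ^ i) y = x) → r x = r y := fun x y hxy =>
    congrArg Quotient.out (Quotient.sound hxy)
  -- the coloring
  let col : X → Fin 3 := fun y => if y = t y then 2 else if y = φ a (t y) then 1
    else if (¬ ∃ i : ℤ, φ (a ^ i) (t y) = y) ∧ y = r y then 1 else 0
  have hcolval : ∀ y : X, col y = (if y = t y then 2 else if y = φ a (t y) then 1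
    else if (¬ ∃ i : ℤ, φ (a ^ i) (t y) = y) ∧ y = r y then 1 else 0 : Fin 3) := fun y => rfl
  refine ⟨col, ?_⟩
  intro g hg
  -- decoding lemmas for the coloring
  have hcol2 : ∀ y : X, col y = 2 → y = t y := by
    intro y hy
    by_contra hne
    rw [hcolval y, if_neg hne] at hy
    split_ifs at hy <;> exact absurd hy (by decide)
  have hcolt : ∀ y : X, y = t y → col y = 2 := by
    intro y hy; rw [hcolval y, if_pos hy]
  have hcol1 : ∀ y : X, col y = 1 → y ≠ t y ∧
      (y = φ a (t y) ∨ ((¬ ∃ i : ℤ, φ (a ^ i) (t y) = y) ∧ y = r y)) := by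
    intro y hy
    rw [hcolval y] at hy
    split_ifs at hy with h1 h2 h3
    · exact absurd hy (by decide)
    · exact ⟨h1, Or.inl h2⟩
    · exact ⟨h1, Or.inr h3⟩
    · exact absurd hy (by decide)
  -- conjugation data
  have hconj : ∀ h : G, ∃ σ : ℤ, ∀ j : ℤ, h * a ^ j * h⁻¹ = a ^ (σ * j) := by
    intro h
    obtain ⟨σ, hσ⟩ := Subgroup.mem_zpowers_iff.mp (hA.conj_mem a (Subgroup.mem_zpowers a) h)
    refine ⟨σ, fun j => ?_⟩
    rw [← conj_zpow, ← hσ, ← zpow_mul]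
  obtain ⟨ρ, hρ⟩ := hconj g
  have hga : ∀ i : ℤ, g * a ^ i = a ^ (ρ * i) * g := by
    intro i
    rw [← hρ i, inv_mul_cancel_right]
  have hga1 : g * a = a ^ ρ * g := by
    have h := hga 1
    rwa [zpow_one, mul_one] at h
  -- it suffices to show that φ g fixes every point
  suffices hfixall : ∀ x : X, φ g x = x by
    apply hφ
    rw [map_one]
    ext z
    exact hfixall z
  intro x
  have htt : t (t x) = t x := htc (t x) x (htG x)
  -- g fixes the special point w := t x
  have hgw : φ g (t x) = t x := by
    have h2 : col (φ g (t x)) = 2 := by rw [hg (t x)]; exact hcolt _ htt.symm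
    have h3 := hcol2 _ h2
    rw [h3, htc (φ g (t x)) (t x) ⟨g, rfl⟩, htt]
  -- the stabilizer of w inside the cyclic normal subgroup
  let S : Subgroup G :=
    { carrier := {k | k ∈ Subgroup.zpowers a ∧ φ k (t x) = t x}
      one_mem' := ⟨(Subgroup.zpowers a).one_mem, one_apply _⟩
      mul_mem' := fun {k l} hk hl =>
        ⟨(Subgroup.zpowers a).mul_mem hk.1 hl.1, by rw [mul_apply, hl.2, hk.2]⟩
      inv_mem' := fun {k} hk => ⟨(Subgroup.zpowers a).inv_mem hk.1, inv_apply _ _ _ hk.2⟩ }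
  have hSle : S ≤ Subgroup.zpowers a := fun k hk => hk.1
  haveI : IsCyclic ↥(Subgroup.zpowers a) := by
    refine ⟨⟨⟨a, Subgroup.mem_zpowers a⟩, fun z => ?_⟩⟩
    obtain ⟨k, hk⟩ := Subgroup.mem_zpowers_iff.mp z.2
    exact ⟨k, Subtype.ext (by rw [SubgroupClass.coe_zpow]; exact hk)⟩
  haveI : IsCyclic ↥S := Subgroup.isCyclic_of_le hSle
  obtain ⟨s₀, hs₀⟩ := IsCyclic.exists_generator (α := ↥S)
  have hk₀S : (s₀ : G) ∈ S := s₀.2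
  have hSgen : ∀ k ∈ S, ∃ u : ℤ, (s₀ : G) ^ u = k := by
    intro k hk
    obtain ⟨u, hu⟩ := hs₀ ⟨k, hk⟩
    refine ⟨u, ?_⟩
    have h := congrArg Subtype.val hu
    rwa [SubgroupClass.coe_zpow] at h
  -- S is closed under conjugation
  have hSconj : ∀ (h : G), ∀ k ∈ S, h * k * h⁻¹ ∈ S := by
    intro h k hk
    obtain ⟨u, hu⟩ := hSgen k hk
    obtain ⟨j₀, hj₀⟩ := Subgroup.mem_zpowers_iff.mp (hSle hk₀S)
    obtain ⟨σ, hσ⟩ := hconj h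
    have hcj : h * (s₀ : G) * h⁻¹ = (s₀ : G) ^ σ := by
      rw [← hj₀, hσ j₀, mul_comm σ j₀, zpow_mul]
    have hs₀σ : (s₀ : G) ^ σ ∈ S := S.zpow_mem hk₀S σ
    have heq : h * k * h⁻¹ = ((s₀ : G) ^ σ) ^ u := by
      rw [← hu, ← conj_zpow, hcj]
    rw [heq]
    exact S.zpow_mem hs₀σ u
  -- elements of S fix the whole G-orbit of w pointwise
  have hSfix : ∀ k ∈ S, ∀ h : G, φ k (φ h (t x)) = φ h (t x) := by
    intro k hk h
    have hmem : h⁻¹ * k * h ∈ S := by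
      have hc := hSconj h⁻¹ k hk
      rwa [inv_inv] at hc
    calc φ k (φ h (t x)) = φ (k * h) (t x) := (mul_apply _ _ _).symm
      _ = φ (h * (h⁻¹ * k * h)) (t x) := by rw [show k * h = h * (h⁻¹ * k * h) by group]
      _ = φ h (φ (h⁻¹ * k * h) (t x)) := mul_apply _ _ _
      _ = φ h (t x) := by rw [hmem.2]
  -- a^(ρ-1) lies in S
  have hkey : a ^ (ρ - 1) ∈ S := by
    by_cases haw : φ a (t x) = t x
    · have haS : a ∈ S := ⟨Subgroup.mem_zpowers a, haw⟩
      have h1 : g * a * g⁻¹ ∈ S := hSconj g a haS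
      have h2 : a ^ ρ ∈ S := by
        have hh := hρ 1
        rw [zpow_one, mul_one] at hh
        rw [← hh]
        exact h1
      have h3 : a ^ (ρ - 1) = a ^ ρ * a⁻¹ := by rw [zpow_sub, zpow_one]
      rw [h3]
      exact S.mul_mem h2 (S.inv_mem haS)
    · -- the point φ a w has color 1
      have htv : t (φ a (t x)) = t x := by
        rw [htc (φ a (t x)) (t x) ⟨a, rfl⟩, htt]
      have hcolv : col (φ a (t x)) = 1 := by
        rw [hcolval (φ a (t x)), htv, if_neg haw, if_pos rfl]
      have hyval : φ g (φ a (t x)) = φ (a ^ ρ) (t x) := by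
        rw [← mul_apply, hga1, mul_apply, hgw]
      have hty : t (φ g (φ a (t x))) = t x := by
        rw [hyval, htc (φ (a ^ ρ) (t x)) (t x) ⟨a ^ ρ, rfl⟩, htt]
      have hcoly : col (φ g (φ a (t x))) = 1 := by rw [hg]; exact hcolv
      obtain ⟨hyne, hyor⟩ := hcol1 _ hcoly
      rcases hyor with h2 | h3
      · -- φ g v = φ a w, so a^(ρ-1) fixes w
        rw [hty] at h2
        have h4 : φ (a ^ ρ) (t x) = φ a (t x) := hyval.symm.trans h2
        have h5 : a ^ (ρ - 1) = a⁻¹ * a ^ ρ := by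
          rw [sub_eq_neg_add, zpow_add, zpow_neg_one]
        have h6 : φ (a ^ (ρ - 1)) (t x) = t x := by
          rw [h5, mul_apply, h4]
          exact inv_apply a _ _ rfl
        exact ⟨Subgroup.zpow_mem _ (Subgroup.mem_zpowers a) _, h6⟩
      · -- impossible: φ g v is in the A-orbit of w
        exfalso
        refine h3.1 ?_
        rw [hty]
        exact ⟨ρ, hyval.symm⟩
  have hSsub : ∀ i : ℤ, a ^ (i * (ρ - 1)) ∈ S := by
    intro i
    rw [mul_comm, zpow_mul]
    exact S.zpow_mem hkey i
  -- if g fixes a point of the G-orbit of w, it fixes its whole A-orbit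
  have hfixext : ∀ z : X, (∃ h : G, φ h (t x) = z) → φ g z = z →
      ∀ i : ℤ, φ g (φ (a ^ i) z) = φ (a ^ i) z := by
    rintro z ⟨h, rfl⟩ hz i
    have h1 : φ g (φ (a ^ i) (φ h (t x))) = φ (a ^ (ρ * i)) (φ h (t x)) := by
      calc φ g (φ (a ^ i) (φ h (t x))) = φ (g * a ^ i) (φ h (t x)) := by rw [mul_apply]
        _ = φ (a ^ (ρ * i) * g) (φ h (t x)) := by rw [hga i]
        _ = φ (a ^ (ρ * i)) (φ g (φ h (t x))) := by rw [mul_apply]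
        _ = φ (a ^ (ρ * i)) (φ h (t x)) := by rw [hz]
    have h2 : a ^ (ρ * i) = a ^ (i * (ρ - 1)) * a ^ i := by
      rw [← zpow_add]
      congr 1
      ring
    rw [h1, h2, mul_apply, ← mul_apply (a ^ i) h (t x)]
    exact hSfix _ (hSsub i) (a ^ i * h)
  -- g moves points of the G-orbit of w within their A-orbits
  have hmoveA : ∀ y : X, (∃ h : G, φ h (t x) = y) → ∃ i : ℤ, φ (a ^ i) y = φ g y := by
    rintro y ⟨h, rfl⟩
    obtain ⟨s, hs⟩ := Subgroup.mem_zpowers_iff.mp (hcomm g⁻¹ h⁻¹)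
    obtain ⟨σ, hσ⟩ := hconj h
    refine ⟨σ * (ρ * s), ?_⟩
    have hc : g * h = h * g * a ^ s := by
      rw [hs, commutatorElement_def]
      group
    calc φ (a ^ (σ * (ρ * s))) (φ h (t x)) = φ (a ^ (σ * (ρ * s)) * h) (t x) := by
          rw [mul_apply]
      _ = φ (h * a ^ (ρ * s) * h⁻¹ * h) (t x) := by rw [hσ (ρ * s)]
      _ = φ (h * a ^ (ρ * s)) (t x) := by rw [inv_mul_cancel_right]
      _ = φ h (φ (a ^ (ρ * s)) (t x)) := mul_apply _ _ _
      _ = φ h (φ (a ^ (ρ * s)) (φ g (t x))) := by rw [hgw]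
      _ = φ h (φ (a ^ (ρ * s) * g) (t x)) := by rw [mul_apply]
      _ = φ h (φ (g * a ^ s) (t x)) := by rw [← hga s]
      _ = φ (h * (g * a ^ s)) (t x) := (mul_apply _ _ _).symm
      _ = φ (g * h) (t x) := by rw [hc, mul_assoc]
      _ = φ g (φ h (t x)) := mul_apply _ _ _
  -- conclusion
  by_cases hxA : ∃ i : ℤ, φ (a ^ i) (t x) = x
  · obtain ⟨i, hi⟩ := hxA
    rw [← hi]
    exact hfixext (t x) ⟨1, one_apply _⟩ hgw i
  · -- x lies in a non-special A-orbit
    have hrGxw : ∃ h : G, φ h (t x) = x := hGsymm (htG x)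
    have hrx : ∃ i : ℤ, φ (a ^ i) x = r x := hrA x
    have hrxG : ∃ h : G, φ h (t x) = r x := hGtrans (hAG hrx) hrGxw
    have hrne : ¬ ∃ i : ℤ, φ (a ^ i) (t x) = r x := by
      rintro ⟨i, hi⟩
      exact hxA (hAtrans (hAsymm hrx) ⟨i, hi⟩)
    have htrx : t (r x) = t x := by rw [htc (r x) (t x) hrxG, htt]
    have hrr : r (r x) = r x := hrc (r x) x hrx
    have hcolrx : col (r x) = 1 := by
      rw [hcolval (r x), htrx]
      have c1 : r x ≠ t x := by
        intro he
        exact hrne ⟨0, by rw [zpow_zero, one_apply, he]⟩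
      have c2 : r x ≠ φ a (t x) := by
        intro he
        exact hrne ⟨1, by rw [zpow_one, ← he]⟩
      rw [if_neg c1, if_neg c2, if_pos ⟨hrne, hrr.symm⟩]
    have hcgr : col (φ g (r x)) = 1 := by rw [hg]; exact hcolrx
    have hgArx : ∃ i : ℤ, φ (a ^ i) (r x) = φ g (r x) := hmoveA (r x) hrxG
    obtain ⟨hne, hor⟩ := hcol1 _ hcgr
    have htgr : t (φ g (r x)) = t x := by rw [htc (φ g (r x)) (r x) ⟨g, rfl⟩, htrx]
    have hgrx : φ g (r x) = r x := by
      rcases hor with h2 | h3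
      · exfalso
        rw [htgr] at h2
        apply hrne
        exact hAtrans (hAsymm hgArx) ⟨1, by rw [zpow_one, ← h2]⟩
      · have h4 := h3.2
        rw [hrc (φ g (r x)) (r x) hgArx, hrr] at h4
        exact h4
    obtain ⟨i, hi⟩ := hAsymm hrx
    rw [← hi]
    exact hfixext (r x) hrxG hgrx i

/-- If `G` is a finite group of squarefree order, then every faithful action of `G` on any
set `X` admits a distinguishing `3`-coloring. Faithful actions are encoded as injective
homomorphisms into the permutation group. -/
theorem distinguishing_of_squarefree_order {G : Type*} [Group G] [Finite G]
    (hG : Squarefree (Nat.card G)) :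
    ∀ (X : Type*) (φ : G →* Equiv.Perm X), Function.Injective φ →
      ∃ col : X → Fin 3, ∀ g : G, (∀ x : X, col (φ g x) = col x) → g = 1 := by
  intro X φ hφ
  obtain ⟨a, hA, hcomm⟩ := exists_cyclic_normal_commutator_container G hG
  exact distinguishing_aux X φ hφ a hA hcomm
end

section
/- Let G be an Abelian group. Then for every set X and every faithful action of G on X there exists a distinguishing 2-coloring of X. -/
/-!
Colour one point of each orbit (a chosen representative) by `0` and every other point by `1`.
An element preserving this colouring maps each representative to a point of the same orbit
that is again coloured `0`, so it fixes every representative. In an abelian group an element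
fixing a point fixes its whole orbit, as `g • h • x = h • g • x = h • x`; hence it acts
trivially, and is `1` when the action is faithful.
-/

namespace MulAction

open Classical in
noncomputable def orbitRepColoring (G X : Type*) [Group G] [MulAction G X] : X → Fin 2 :=
  fun x => if (Quotient.mk'' x : orbitRel.Quotient G X).out = x then 0 else 1

theorem smul_out_eq_of_preserves_orbitRepColoring {G X : Type*} [Group G] [MulAction G X]
    {g : G} (hg : ∀ x, orbitRepColoring G X (g • x) = orbitRepColoring G X x)
    (q : orbitRel.Quotient G X) : g • q.out = q.out := by
  have hq : (Quotient.mk'' (g • q.out) : orbitRel.Quotient G X) = q := by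
    rw [← Quotient.out_eq' q, Quotient.eq'', orbitRel_apply, Quotient.out_eq']
    exact mem_orbit q.out g
  by_contra hne
  have hcol := hg q.out
  rw [orbitRepColoring, orbitRepColoring, hq, Quotient.out_eq', if_neg (Ne.symm hne),
    if_pos rfl] at hcol
  exact absurd hcol (by decide)

theorem smul_eq_self_of_forall_smul_out_eq {G X : Type*} [CommGroup G] [MulAction G X]
    {g : G} (hg : ∀ q : orbitRel.Quotient G X, g • q.out = q.out) (x : X) : g • x = x := by
  obtain ⟨h, hx⟩ : x ∈ orbit G (Quotient.mk'' x : orbitRel.Quotient G X).out := by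
    rw [← orbitRel_apply, ← Quotient.eq'', Quotient.out_eq']
  rw [← hx, smul_smul, mul_comm, mul_smul, hg]

theorem exists_distinguishing_coloring (G X : Type*) [CommGroup G] [MulAction G X]
    [FaithfulSMul G X] : ∃ c : X → Fin 2, ∀ g : G, (∀ x, c (g • x) = c x) → g = 1 :=
  ⟨orbitRepColoring G X, fun _ hg => eq_of_smul_eq_smul fun x => by
    rw [one_smul, smul_eq_self_of_forall_smul_out_eq
      (smul_out_eq_of_preserves_orbitRepColoring hg)]⟩

end MulAction

/-- If `G` is an Abelian group, then every faithful action of `G` on any set `X` admits a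
distinguishing `2`-coloring. Faithful actions are encoded as injective homomorphisms into
the permutation group. -/
theorem distinguishing_of_abelian {G : Type*} [CommGroup G] :
    ∀ (X : Type*) (φ : G →* Equiv.Perm X), Function.Injective φ →
      ∃ col : X → Fin 2, ∀ g : G, (∀ x : X, col (φ g x) = col x) → g = 1 := by
  intro X φ hφ
  let _ : MulAction G X := MulAction.compHom X φ
  have : FaithfulSMul G X := ⟨fun h => hφ (Equiv.ext h)⟩
  exact MulAction.exists_distinguishing_coloring G X
end

section
/- Let G be a dihedral group (the dihedral group of order 2n for some n). Then for every set X and every faithful action of G on X there exists a distinguishing 3-coloring of X. -/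
/-- If `G` is a dihedral group of order `2 * n` (`n ≥ 1`), then every faithful action of `G`
on any set `X` admits a distinguishing `3`-coloring. Faithful actions are encoded as
injective homomorphisms into the permutation group. -/
theorem distinguishing_of_dihedral (n : ℕ) (hn : 0 < n) :
    ∀ (X : Type*) (φ : DihedralGroup n →* Equiv.Perm X), Function.Injective φ →
      ∃ col : X → Fin 3, ∀ g : DihedralGroup n, (∀ x : X, col (φ g x) = col x) → g = 1 := by
  intro X φ hφ
  classical
  -- the orbit equivalence relation
  let S : Setoid X :=
    ⟨fun x y => ∃ g : DihedralGroup n, φ g x = y,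
     ⟨fun x => ⟨1, by simp⟩,
      fun {x y} h => by
        obtain ⟨g, hg⟩ := h
        exact ⟨g⁻¹, by rw [← hg, map_inv]; simp⟩,
      fun {x y z} h h' => by
        obtain ⟨g, hg⟩ := h
        obtain ⟨g', hg'⟩ := h'
        exact ⟨g' * g, by rw [map_mul]; simp [hg, hg']⟩⟩⟩
  -- a choice of representative in each orbit
  let R : X → X := fun x => (Quotient.mk S x).out
  have hmkR : ∀ x, Quotient.mk S (R x) = Quotient.mk S x := fun x => Quotient.out_eq _
  have hRg : ∀ (g : DihedralGroup n) (x : X), R (φ g x) = R x := by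
    intro g x
    have h : Quotient.mk S (φ g x) = Quotient.mk S x :=
      Quotient.sound ⟨g⁻¹, by rw [map_inv]; simp⟩
    show (Quotient.mk S (φ g x)).out = (Quotient.mk S x).out
    rw [h]
  have hRR : ∀ x, R (R x) = R x := by
    intro x
    show (Quotient.mk S (R x)).out = (Quotient.mk S x).out
    rw [hmkR]
  have hout : ∀ x, ∃ g : DihedralGroup n, φ g (R x) = x := fun x => Quotient.exact (hmkR x)
  -- a rotation fixing every representative is trivial
  have rotfix : ∀ a : ZMod n, (∀ x, φ (DihedralGroup.r a) (R x) = R x) →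
      DihedralGroup.r a = (1 : DihedralGroup n) := by
    intro a ha
    have hainv : ∀ x, φ (DihedralGroup.r (-a)) (R x) = R x := by
      intro x
      have h1 : (DihedralGroup.r (-a) : DihedralGroup n) = (DihedralGroup.r a)⁻¹ := rfl
      rw [h1, map_inv]
      conv_lhs => rw [← ha x]
      simp
    apply hφ
    rw [map_one]
    ext y
    show φ (DihedralGroup.r a) y = y
    obtain ⟨h, hh⟩ := hout y
    have key : φ (DihedralGroup.r a) (φ h (R y)) = φ h (R y) := by
      cases h with
      | r k =>
        have : DihedralGroup.r a * DihedralGroup.r k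
            = DihedralGroup.r k * DihedralGroup.r a := by
          rw [DihedralGroup.r_mul_r, DihedralGroup.r_mul_r, add_comm]
        calc φ (DihedralGroup.r a) (φ (DihedralGroup.r k) (R y))
            = φ (DihedralGroup.r a * DihedralGroup.r k) (R y) := by rw [map_mul]; rfl
          _ = φ (DihedralGroup.r k * DihedralGroup.r a) (R y) := by rw [this]
          _ = φ (DihedralGroup.r k) (φ (DihedralGroup.r a) (R y)) := by rw [map_mul]; rfl
          _ = φ (DihedralGroup.r k) (R y) := by rw [ha]
      | sr k =>
        have : DihedralGroup.r a * DihedralGroup.sr k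
            = DihedralGroup.sr k * DihedralGroup.r (-a) := by
          rw [DihedralGroup.r_mul_sr, DihedralGroup.sr_mul_r, sub_eq_add_neg]
        calc φ (DihedralGroup.r a) (φ (DihedralGroup.sr k) (R y))
            = φ (DihedralGroup.r a * DihedralGroup.sr k) (R y) := by rw [map_mul]; rfl
          _ = φ (DihedralGroup.sr k * DihedralGroup.r (-a)) (R y) := by rw [this]
          _ = φ (DihedralGroup.sr k) (φ (DihedralGroup.r (-a)) (R y)) := by rw [map_mul]; rfl
          _ = φ (DihedralGroup.sr k) (R y) := by rw [hainv]
    rw [hh] at key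
    exact key
  by_cases hH : ∃ a : ZMod n, ∀ x, φ (DihedralGroup.sr a) (R x) = R x
  · -- some reflection fixes every representative; use a third color
    obtain ⟨a, ha⟩ := hH
    obtain ⟨y, hy⟩ : ∃ y, φ (DihedralGroup.sr a) y ≠ y := by
      by_contra h
      push_neg at h
      have h1 : φ (DihedralGroup.sr a) = φ 1 := by
        rw [map_one]; ext z; exact h z
      have h2 : (DihedralGroup.sr a : DihedralGroup n) = 1 := hφ h1
      rw [DihedralGroup.one_def] at h2
      cases h2
    have hyR : ∀ x, R x ≠ y := by
      intro x hx
      exact hy (by rw [← hx, ha x, hx])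
    refine ⟨fun x => if x = y then 2 else if x = R x then 1 else 0, ?_⟩
    intro g hg
    have hfix : ∀ x, φ g (R x) = R x := by
      intro x
      have h1 := hg (R x)
      dsimp only at h1
      have h2 : (if R x = y then (2 : Fin 3) else if R x = R (R x) then 1 else 0) = 1 := by
        rw [if_neg (hyR x), if_pos (hRR x).symm]
      rw [hRR] at h1 h2
      rw [h2] at h1
      by_contra hne
      by_cases hcy : φ g (R x) = y
      · rw [if_pos hcy] at h1; exact absurd h1 (by decide)
      · rw [if_neg hcy] at h1
        have : R (φ g (R x)) = R x := by rw [hRg, hRR]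
        rw [this] at h1
        rw [if_neg hne] at h1
        exact absurd h1 (by decide)
    cases g with
    | r b => exact rotfix b hfix
    | sr b =>
      exfalso
      have hprod : ∀ x, φ (DihedralGroup.r (b - a)) (R x) = R x := by
        intro x
        have : (DihedralGroup.r (b - a) : DihedralGroup n)
            = DihedralGroup.sr a * DihedralGroup.sr b := by
          rw [DihedralGroup.sr_mul_sr]
        rw [this, map_mul]
        show φ (DihedralGroup.sr a) (φ (DihedralGroup.sr b) (R x)) = R x
        rw [hfix x, ha x]
      have hba : (DihedralGroup.r (b - a) : DihedralGroup n) = 1 := rotfix _ hprod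
      rw [DihedralGroup.one_def] at hba
      have hba' : b - a = 0 := by injection hba
      have hbeq : b = a := by
        have := sub_eq_zero.mp hba'
        exact this
      subst hbeq
      -- g = sr b fixes y's color, but moves y
      have h1 := hg y
      dsimp only at h1
      have h2 : (if y = y then (2 : Fin 3) else if y = R y then 1 else 0) = 2 := if_pos rfl
      rw [h2] at h1
      by_cases hcy : φ (DihedralGroup.sr b) y = y
      · exact hy hcy
      · rw [if_neg hcy] at h1
        by_cases hr : φ (DihedralGroup.sr b) y = R (φ (DihedralGroup.sr b) y)
        · rw [if_pos hr] at h1; exact absurd h1 (by decide)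
        · rw [if_neg hr] at h1; exact absurd h1 (by decide)
  · -- no reflection fixes all representatives
    push_neg at hH
    refine ⟨fun x => if x = R x then 1 else 0, ?_⟩
    intro g hg
    have hfix : ∀ x, φ g (R x) = R x := by
      intro x
      have h1 := hg (R x)
      dsimp only at h1
      have h2 : (if R x = R (R x) then (1 : Fin 3) else 0) = 1 := if_pos (hRR x).symm
      rw [hRR] at h1 h2
      rw [h2] at h1
      by_contra hne
      have : R (φ g (R x)) = R x := by rw [hRg, hRR]
      rw [this, if_neg hne] at h1
      exact absurd h1 (by decide)
    cases g with
    | r b => exact rotfix b hfix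
    | sr b =>
      exfalso
      obtain ⟨x, hx⟩ := hH b
      exact hx (hfix x)
end

section
/- Let K be a field that is either infinite or finite of cardinality greater than n+1. Then there exists a 2-coloring c : Kⁿ → {1,2} of the vector space Kⁿ such that the only matrix A ∈ GLₙ(K) with c(Av) = c(v) for all v ∈ Kⁿ is the identity matrix. -/
lemma exists_good_unit (n : ℕ) (K : Type*) [Field K]
    (hK : Infinite K ∨ n + 1 < Nat.card K) :
    ∃ a : Kˣ, ∀ m₁ ≤ n, ∀ m₂ ≤ n, a ^ m₁ = a ^ m₂ → m₁ = m₂ := by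
  suffices h : ∃ a : Kˣ, n < orderOf a ∨ ¬ IsOfFinOrder a by
    obtain ⟨a, h⟩ := h
    refine ⟨a, fun m₁ hm₁ m₂ hm₂ heq => ?_⟩
    rcases h with h | h
    · exact pow_injOn_Iio_orderOf (Set.mem_Iio.2 (lt_of_le_of_lt hm₁ h))
        (Set.mem_Iio.2 (lt_of_le_of_lt hm₂ h)) heq
    · exact injective_pow_iff_not_isOfFinOrder.2 h heq
  rcases hK with hK | hK
  · by_contra hcon
    push_neg at hcon
    have hbound : ∀ a : Kˣ, a ^ (n.factorial) = 1 := by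
      intro a
      obtain ⟨h1, h2⟩ := hcon a
      exact orderOf_dvd_iff_pow_eq_one.1 (Nat.dvd_factorial h2.orderOf_pos h1)
    have hfin : Set.Finite {x : K | (Polynomial.X ^ n.factorial - 1 : Polynomial K).IsRoot x} := by
      apply Polynomial.finite_setOf_isRoot
      intro h
      have := congrArg (Polynomial.eval 0) h
      simp [zero_pow (Nat.factorial_pos n).ne'] at this
    have hsub : {x : K | x ≠ 0} ⊆
        {x : K | (Polynomial.X ^ n.factorial - 1 : Polynomial K).IsRoot x} := by
      intro x hx
      have hu := hbound (Units.mk0 x hx)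
      have hx1 : x ^ n.factorial = 1 := by
        have := congrArg (Units.val) hu
        simpa using this
      simp [Polynomial.IsRoot, hx1]
    have h1 : Set.Finite {x : K | x ≠ 0} := hfin.subset hsub
    have h2 : Set.Finite (Set.univ : Set K) := by
      refine (h1.insert 0).subset ?_
      intro x _
      by_cases hx : x = 0 <;> simp [hx]
    exact Set.infinite_univ h2
  · have hfinite : Finite K := Nat.finite_of_card_ne_zero (by omega)
    obtain ⟨g, hg⟩ := IsCyclic.exists_generator (α := Kˣ)
    refine ⟨g, Or.inl ?_⟩
    have horder : orderOf g = Nat.card Kˣ := orderOf_eq_card_of_forall_mem_zpowers hg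
    have hcard : Nat.card Kˣ = Nat.card K - 1 := Nat.card_units K
    omega

open Matrix in
/-- If the field `K` is infinite or finite of cardinality greater than `n + 1`, then there is
a `2`-coloring of `Kⁿ` such that the only matrix `A ∈ GLₙ(K)` with `c (A *ᵥ v) = c v` for all
`v` is the identity. -/
theorem distinguishing_two_coloring_GL (n : ℕ) (K : Type*) [Field K]
    (hK : Infinite K ∨ n + 1 < Nat.card K) :
    ∃ c : (Fin n → K) → Fin 2,
      ∀ A : GL (Fin n) K,
        (∀ v : Fin n → K, c ((A : Matrix (Fin n) (Fin n) K).mulVec v) = c v) → A = 1 := by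
  classical
  match n, hK with
  | 0, _ =>
    refine ⟨fun _ => 0, fun A _ => Units.ext ?_⟩
    ext i j
    exact i.elim0
  | 1, hK =>
    refine ⟨fun v => if v = (fun _ => (1 : K)) then 0 else 1, fun A hA => ?_⟩
    have h := hA (fun _ => 1)
    dsimp only at h
    rw [if_pos rfl] at h
    have h1 : (A : Matrix (Fin 1) (Fin 1) K).mulVec (fun _ => 1) = fun _ => 1 := by
      by_contra hne
      rw [if_neg hne] at h
      exact absurd h (by decide)
    have h2 := congrFun h1 0
    simp only [Matrix.mulVec, dotProduct, Fin.sum_univ_one, mul_one] at h2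
    refine Units.ext ?_
    show (A : Matrix (Fin 1) (Fin 1) K) = 1
    ext i j
    have hi : i = 0 := Subsingleton.elim _ _
    have hj : j = 0 := Subsingleton.elim _ _
    subst hi; subst hj
    simp [h2, Matrix.one_apply]
  | (m + 2), hK =>
    obtain ⟨a, ha⟩ := exists_good_unit (m + 2) K hK
    set N := m + 2 with hNdef
    let e : Fin N → (Fin N → K) := fun i => Pi.single i 1
    let u : Fin N → K := fun _ => 1
    let S : Set (Fin N → K) :=
      {v | (∃ i : Fin N, ∃ j : ℕ, j ≤ (i : ℕ) + 1 ∧ v = (a : K) ^ j • e i) ∨ v = u}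
    have ha' : ∀ m₁ ≤ N, ∀ m₂ ≤ N, (a : K) ^ m₁ = (a : K) ^ m₂ → m₁ = m₂ := by
      intro m₁ h₁ m₂ h₂ heq
      exact ha m₁ h₁ m₂ h₂ (Units.ext (by simpa using heq))
    have hane0 : (a : K) ≠ 0 := a.ne_zero
    have hane1 : (a : K) ≠ 1 := by
      intro h
      have : (1 : ℕ) = 0 := ha' 1 (by omega) 0 (by omega) (by simp [h])
      omega
    have hemem : ∀ i, e i ∈ S := fun i => Or.inl ⟨i, 0, by omega, by simp⟩
    have humem : u ∈ S := Or.inr rfl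
    -- (L1) : no multiple of a basis vector is u
    have hL1 : ∀ (c : K) (k : Fin N), c • e k ≠ u := by
      intro c k hcon
      obtain ⟨k', hk'⟩ := exists_ne k
      have := congrFun hcon k'
      simp [e, u, Pi.single_apply, hk'] at this
    -- (L2) : nontrivial multiples of u don't lie in S
    have hL2 : ∀ c : K, c ≠ 0 → c ≠ 1 → c • u ∉ S := by
      intro c hc0 hc1 hmem
      rcases hmem with ⟨i, j, _, heq⟩ | heq
      · obtain ⟨k', hk'⟩ := exists_ne i
        have := congrFun heq k'
        simp [e, u, Pi.single_apply, hk'] at this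
        exact hc0 this
      · have := congrFun heq 0
        simp [u] at this
        exact hc1 this
    -- (L3) : decoding membership of multiples of basis vectors
    have hL3 : ∀ (c : K) (k : Fin N), c ≠ 0 → c • e k ∈ S →
        ∃ j : ℕ, j ≤ (k : ℕ) + 1 ∧ c = (a : K) ^ j := by
      intro c k hc0 hmem
      rcases hmem with ⟨i, j, hj, heq⟩ | heq
      · have hik := congrFun heq k
        simp only [e, Pi.smul_apply, smul_eq_mul, Pi.single_eq_same, mul_one,
          Pi.single_apply] at hik
        by_cases hki : k = i
        · subst hki
          rw [if_pos rfl, mul_one] at hik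
          exact ⟨j, hj, hik⟩
        · rw [if_neg hki, mul_zero] at hik
          exact absurd hik hc0
      · exact absurd heq (hL1 c k)
    -- the key counting step
    have step1 : ∀ B : GL (Fin N) K,
        (∀ v, (B : Matrix (Fin N) (Fin N) K).mulVec v ∈ S ↔ v ∈ S) →
        ∀ i : Fin N, ∃ k : Fin N, ∃ j : ℕ,
          (B : Matrix (Fin N) (Fin N) K).mulVec (e i) = (a : K) ^ j • e k ∧ (i : ℕ) ≤ (k : ℕ) := by
      intro B hB i
      have h0 : (B : Matrix (Fin N) (Fin N) K).mulVec (e i) ∈ S := (hB (e i)).2 (hemem i)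
      have hBu : (B : Matrix (Fin N) (Fin N) K).mulVec (e i) ≠ u := by
        intro hu
        have h1 : (B : Matrix (Fin N) (Fin N) K).mulVec ((a : K) ^ 1 • e i) ∈ S :=
          (hB _).2 (Or.inl ⟨i, 1, by omega, rfl⟩)
        rw [Matrix.mulVec_smul, hu, pow_one] at h1
        exact hL2 _ hane0 hane1 h1
      obtain ⟨k, j, hj, heq⟩ : ∃ k : Fin N, ∃ j : ℕ, j ≤ (k : ℕ) + 1 ∧
          (B : Matrix (Fin N) (Fin N) K).mulVec (e i) = (a : K) ^ j • e k := by
        rcases h0 with ⟨k, j, hj, heq⟩ | heq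
        · exact ⟨k, j, hj, heq⟩
        · exact absurd heq hBu
      refine ⟨k, j, heq, ?_⟩
      have hmap : ∀ p : ℕ, ∃ q : ℕ, p ≤ (i : ℕ) + 1 →
          q ≤ (k : ℕ) + 1 ∧ (a : K) ^ (p + j) = (a : K) ^ q := by
        intro p
        by_cases hp : p ≤ (i : ℕ) + 1
        · have hmem2 : (B : Matrix (Fin N) (Fin N) K).mulVec ((a : K) ^ p • e i) ∈ S :=
            (hB _).2 (Or.inl ⟨i, p, hp, rfl⟩)
          rw [Matrix.mulVec_smul, heq, smul_smul, ← pow_add] at hmem2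
          obtain ⟨q, hq, hcq⟩ := hL3 _ k (pow_ne_zero _ hane0) hmem2
          exact ⟨q, fun _ => ⟨hq, hcq⟩⟩
        · exact ⟨0, fun h => absurd h hp⟩
      choose F hF using hmap
      have hcard : (i : ℕ) + 2 ≤ (k : ℕ) + 2 := by
        have hmapsto : ∀ p ∈ Finset.range ((i : ℕ) + 2), F p ∈ Finset.range ((k : ℕ) + 2) := by
          intro p hp
          rw [Finset.mem_range] at hp ⊢
          have := (hF p (by omega)).1
          omega
        have hinj : Set.InjOn F (Finset.range ((i : ℕ) + 2)) := by
          intro p₁ hp₁ p₂ hp₂ hFeq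
          rw [Finset.coe_range, Set.mem_Iio] at hp₁ hp₂
          have h₁ := (hF p₁ (by omega)).2
          have h₂ := (hF p₂ (by omega)).2
          rw [hFeq] at h₁
          have hpow : (a : K) ^ (p₁ + j) = (a : K) ^ (p₂ + j) := h₁.trans h₂.symm
          rw [pow_add, pow_add] at hpow
          have : (a : K) ^ p₁ = (a : K) ^ p₂ :=
            mul_right_cancel₀ (pow_ne_zero _ hane0) hpow
          have hiN : (i : ℕ) + 1 ≤ N := by omega
          exact ha' p₁ (by omega) p₂ (by omega) this
        have := Finset.card_le_card_of_injOn F hmapsto hinj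
        simpa using this
      omega
    refine ⟨fun v => if v ∈ S then 0 else 1, fun A hA => ?_⟩
    have hmem : ∀ v, (A : Matrix (Fin N) (Fin N) K).mulVec v ∈ S ↔ v ∈ S := by
      intro v
      have h := hA v
      dsimp only at h
      constructor
      · intro h1
        by_contra h2
        rw [if_pos h1, if_neg h2] at h
        exact absurd h (by decide)
      · intro h2
        by_contra h1
        rw [if_neg h1, if_pos h2] at h
        exact absurd h (by decide)
    have hAAinv : (A : Matrix (Fin N) (Fin N) K) *
        ((A⁻¹ : GL (Fin N) K) : Matrix (Fin N) (Fin N) K) = 1 := by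
      rw [← Units.val_mul, mul_inv_cancel, Units.val_one]
    have hAinvA : ((A⁻¹ : GL (Fin N) K) : Matrix (Fin N) (Fin N) K) *
        (A : Matrix (Fin N) (Fin N) K) = 1 := by
      rw [← Units.val_mul, inv_mul_cancel, Units.val_one]
    have hmem' : ∀ v, ((A⁻¹ : GL (Fin N) K) : Matrix (Fin N) (Fin N) K).mulVec v ∈ S ↔ v ∈ S := by
      intro v
      have h := hmem (((A⁻¹ : GL (Fin N) K) : Matrix (Fin N) (Fin N) K).mulVec v)
      rw [Matrix.mulVec_mulVec, hAAinv, Matrix.one_mulVec] at h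
      exact h.symm
    choose k j hAe hle using step1 A hmem
    choose k' j' hAe' hle' using step1 A⁻¹ hmem'
    have hkeq : ∀ i, k i = i := by
      intro i
      have h2 : ((A⁻¹ : GL (Fin N) K) : Matrix (Fin N) (Fin N) K).mulVec
          ((A : Matrix (Fin N) (Fin N) K).mulVec (e i)) = e i := by
        rw [Matrix.mulVec_mulVec, hAinvA, Matrix.one_mulVec]
      rw [hAe i, Matrix.mulVec_smul, hAe' (k i), smul_smul] at h2
      have h1 : e i = ((a : K) ^ (j i) * (a : K) ^ (j' (k i))) • e (k' (k i)) := h2.symm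
      have hcne : ((a : K) ^ (j i) * (a : K) ^ (j' (k i))) ≠ 0 :=
        mul_ne_zero (pow_ne_zero _ hane0) (pow_ne_zero _ hane0)
      have hki : k' (k i) = i := by
        by_contra hne
        have h3 := congrFun h1 (k' (k i))
        simp [e, Pi.single_apply, hne] at h3
      have hik : (i : ℕ) ≤ (k i : ℕ) := hle i
      have hk'i : (k i : ℕ) ≤ (k' (k i) : ℕ) := hle' (k i)
      rw [hki] at hk'i
      exact Fin.ext (by omega)
    have husum : ∑ i' : Fin N, e i' = u := Finset.univ_sum_single u
    have hAu : (A : Matrix (Fin N) (Fin N) K).mulVec u = fun t => (a : K) ^ (j t) := by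
      have h1 : (A : Matrix (Fin N) (Fin N) K).mulVec u =
          ∑ i' : Fin N, (A : Matrix (Fin N) (Fin N) K).mulVec (e i') := by
        rw [← husum, ← Matrix.mulVecLin_apply, map_sum]
        simp [Matrix.mulVecLin_apply]
      rw [h1]
      have h2 : ∀ i' : Fin N, (A : Matrix (Fin N) (Fin N) K).mulVec (e i') =
          Pi.single i' ((a : K) ^ (j i')) := by
        intro i'
        rw [hAe i', hkeq i']
        funext t
        simp [e, Pi.single_apply, mul_ite]
      rw [Finset.sum_congr rfl fun i' _ => h2 i']
      exact Finset.univ_sum_single _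
    have hju : ∀ t, (a : K) ^ (j t) = 1 := by
      have hin : (A : Matrix (Fin N) (Fin N) K).mulVec u ∈ S := (hmem u).2 humem
      rw [hAu] at hin
      rcases hin with ⟨i0, j0, _, heq⟩ | heq
      · obtain ⟨t, ht⟩ := exists_ne i0
        have h4 := congrFun heq t
        simp [e, Pi.single_apply, ht] at h4
      · intro t
        exact congrFun heq t
    have hAe1 : ∀ i, (A : Matrix (Fin N) (Fin N) K).mulVec (e i) = e i := by
      intro i
      rw [hAe i, hkeq i, hju i, one_smul]
    refine Units.ext ?_
    show (A : Matrix (Fin N) (Fin N) K) = 1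
    ext t s
    have h := congrFun (hAe1 s) t
    simp only [e, Matrix.mulVec_single, mul_one, MulOpposite.op_one, one_smul, Matrix.col_apply] at h
    rw [h, Pi.single_apply, Matrix.one_apply]
end

section
/- Let n ≥ 1 and let K be a field that is either infinite or finite of cardinality greater than n+1. Then the distinguishing number of the action of GLₙ(K) on Kⁿ equals 2: there exists a 2-coloring of Kⁿ such that the only matrix in GLₙ(K) preserving it is the identity, and there is no 1-coloring with this property (equivalently, GLₙ(K) is nontrivial). -/
/-- There exist `n+1` distinct nonzero elements in `K`. -/
lemma exists_distinct_nonzero (n : ℕ) (K : Type*) [Field K]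
    (hK : Infinite K ∨ n + 1 < Nat.card K) :
    ∃ t : Fin (n + 1) → K, Function.Injective t ∧ ∀ j, t j ≠ 0 := by
  classical
  obtain ⟨f, hf⟩ : ∃ f : Fin (n + 2) → K, Function.Injective f := by
    rcases hK with h | h
    · exact ⟨fun j => Infinite.natEmbedding K j,
        fun a b hab => Fin.val_injective ((Infinite.natEmbedding K).injective hab)⟩
    · haveI : Finite K := Nat.finite_of_card_ne_zero (by omega)
      haveI := Fintype.ofFinite K
      have hcard : Fintype.card (Fin (n + 2)) ≤ Fintype.card K := by
        rw [Fintype.card_fin, ← Nat.card_eq_fintype_card]; omega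
      obtain ⟨e⟩ := Function.Embedding.nonempty_iff_card_le.mpr hcard
      exact ⟨e, e.injective⟩
  have hsc : n + 1 ≤ ((Finset.univ.image f).erase 0).card := by
    have h1 : (Finset.univ.image f).card = n + 2 := by
      rw [Finset.card_image_of_injective _ hf, Finset.card_univ, Fintype.card_fin]
    have := Finset.pred_card_le_card_erase (s := Finset.univ.image f) (a := (0 : K))
    omega
  obtain ⟨s', hsub, hcard⟩ := Finset.exists_subset_card_eq hsc
  refine ⟨fun j => (s'.equivFin.symm (Fin.cast hcard.symm j) : K), ?_, ?_⟩
  · intro a b hab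
    have := s'.equivFin.symm.injective (Subtype.val_injective hab)
    simpa [Fin.ext_iff] using congrArg Fin.val this
  · intro j
    exact Finset.ne_of_mem_erase (hsub (s'.equivFin.symm (Fin.cast hcard.symm j)).2)

lemma card_filter_fin_le (N m : ℕ) (hm : m ≤ N) :
    (Finset.univ.filter (fun j : Fin (N + 1) => (j : ℕ) ≤ m)).card = m + 1 := by
  rw [← Fintype.card_subtype]
  have e : {j : Fin (N + 1) // (j : ℕ) ≤ m} ≃ Fin (m + 1) :=
    { toFun := fun j => ⟨j.1.1, Nat.lt_succ_of_le j.2⟩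
      invFun := fun a => ⟨⟨a.1, by have := a.2; omega⟩, Nat.le_of_lt_succ a.2⟩
      left_inv := fun j => by ext; rfl
      right_inv := fun a => by ext; rfl }
  rw [Fintype.card_congr e, Fintype.card_fin]

lemma fin_inj_ge_eq_id {n : ℕ} (τ : Fin n → Fin n) (hinj : Function.Injective τ)
    (hle : ∀ i : Fin n, (i : ℕ) ≤ ((τ i) : ℕ)) : ∀ i, τ i = i := by
  have hbij := Finite.injective_iff_bijective.mp hinj
  have hsum : ∑ i : Fin n, ((τ i) : ℕ) = ∑ i : Fin n, (i : ℕ) :=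
    hbij.sum_comp (fun j : Fin n => (j : ℕ))
  have h := (Finset.sum_eq_sum_iff_of_le (fun i _ => hle i)).mp hsum.symm
  intro i
  exact Fin.ext ((h i (Finset.mem_univ i)).symm)

/-- The main construction for `n ≥ 2`. -/
lemma key2 (n : ℕ) (hn2 : 2 ≤ n) (K : Type*) [Field K] (t : Fin (n + 1) → K)
    (ht : Function.Injective t) (ht0 : ∀ j, t j ≠ 0) :
    ∃ c : (Fin n → K) → Fin 2,
      ∀ A : GL (Fin n) K,
        (∀ v : Fin n → K, c ((A : Matrix (Fin n) (Fin n) K).mulVec v) = c v) → A = 1 := by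
  classical
  set w : Fin n → K := fun _ => 1 with hwdef
  set S : (Fin n → K) → Prop := fun v =>
    (∃ (i : Fin n) (j : Fin (n + 1)), (j : ℕ) ≤ (i : ℕ) + 1 ∧ v = t j • (Pi.single i (1 : K) : Fin n → K))
      ∨ v = w with hSdef
  refine ⟨fun v => if S v then 0 else 1, ?_⟩
  intro A hc
  set M : Matrix (Fin n) (Fin n) K := (A : Matrix (Fin n) (Fin n) K) with hM
  have hfwd : ∀ v, S v → S (M.mulVec v) := by
    intro v hv
    by_contra hnv
    have h := hc v
    dsimp only at h
    rw [if_pos hv, if_neg hnv] at h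
    exact absurd h (by decide)
  have hinvmul : ((A⁻¹ : GL (Fin n) K) : Matrix (Fin n) (Fin n) K) * M = 1 := by
    rw [hM]; exact A.inv_mul
  have hMinj : Function.Injective M.mulVec := by
    intro x y hxy
    have h2 : ((A⁻¹ : GL (Fin n) K) : Matrix (Fin n) (Fin n) K).mulVec (M.mulVec x)
        = ((A⁻¹ : GL (Fin n) K) : Matrix (Fin n) (Fin n) K).mulVec (M.mulVec y) := by
      rw [hxy]
    rwa [Matrix.mulVec_mulVec, Matrix.mulVec_mulVec, hinvmul, Matrix.one_mulVec,
      Matrix.one_mulVec] at h2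
  have hNe : ∀ (k : Fin n), ∃ m : Fin n, m ≠ k := by
    intro k
    haveI : Nontrivial (Fin n) := ⟨⟨⟨0, by omega⟩, ⟨1, by omega⟩, by simp [Fin.ext_iff]⟩⟩
    exact exists_ne k
  have hmem : ∀ (i : Fin n) (j : Fin (n + 1)), (j : ℕ) ≤ (i : ℕ) + 1 →
      S (t j • M.mulVec ((Pi.single i (1 : K) : Fin n → K))) := by
    intro i j hj
    have h1 : S (t j • (Pi.single i (1 : K) : Fin n → K)) := Or.inl ⟨i, j, hj, rfl⟩
    have h2 := hfwd _ h1
    rwa [Matrix.mulVec_smul] at h2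
  -- elements of S proportional to a coordinate vector
  have hline : ∀ (a : K) (k : Fin n), a ≠ 0 → S (a • (Pi.single k (1 : K) : Fin n → K)) →
      ∃ j' : Fin (n + 1), (j' : ℕ) ≤ (k : ℕ) + 1 ∧ t j' = a := by
    intro a k ha hS
    rcases hS with ⟨i', j', hj', heq⟩ | heq
    · have hk := congrFun heq k
      simp only [Pi.smul_apply, Pi.single_apply, smul_eq_mul] at hk
      by_cases hki : k = i'
      · subst hki
        simp at hk
        exact ⟨j', hj', hk.symm⟩
      · simp [hki] at hk
        exact absurd hk ha
    · exfalso
      obtain ⟨m, hm⟩ := hNe k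
      have hk := congrFun heq m
      simp only [Pi.smul_apply, Pi.single_apply, smul_eq_mul, hwdef, if_neg hm,
        mul_zero] at hk
      exact zero_ne_one hk
  -- elements of S proportional to w
  have hwmul : ∀ a : K, S (a • w) → a = 1 := by
    intro a hS
    rcases hS with ⟨i', j', hj', heq⟩ | heq
    · exfalso
      obtain ⟨m, hm⟩ := hNe i'
      have h1 := congrFun heq m
      have h2 := congrFun heq i'
      simp only [Pi.smul_apply, Pi.single_apply, smul_eq_mul, hwdef] at h1 h2
      simp [hm] at h1
      simp [h1] at h2
      exact ht0 j' h2.symm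
    · have h1 := congrFun heq ⟨0, by omega⟩
      simpa [hwdef] using h1
  have key1 : ∀ i : Fin n, ∃ (k : Fin n) (r : K), r ≠ 0 ∧ (i : ℕ) ≤ (k : ℕ) ∧
      M.mulVec ((Pi.single i (1 : K) : Fin n → K)) = r • (Pi.single k (1 : K) : Fin n → K) := by
    intro i
    have z0lt : (0 : ℕ) < n + 1 := by omega
    have z1lt : (1 : ℕ) < n + 1 := by omega
    have h0 : S (t ⟨0, z0lt⟩ • M.mulVec ((Pi.single i (1 : K) : Fin n → K))) :=
      hmem i ⟨0, z0lt⟩ (Nat.zero_le _)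
    rcases h0 with ⟨k, j0, hj0, heq⟩ | heq
    · have hu_eq : M.mulVec ((Pi.single i (1 : K) : Fin n → K))
          = ((t ⟨0, z0lt⟩)⁻¹ * t j0) • (Pi.single k (1 : K) : Fin n → K) := by
        have h1 := congrArg (fun v : Fin n → K => (t ⟨0, z0lt⟩)⁻¹ • v) heq
        rw [smul_smul, smul_smul, inv_mul_cancel₀ (ht0 ⟨0, z0lt⟩), one_smul] at h1
        exact h1
      set r : K := (t ⟨0, z0lt⟩)⁻¹ * t j0 with hr
      have hr0 : r ≠ 0 := mul_ne_zero (inv_ne_zero (ht0 ⟨0, z0lt⟩)) (ht0 j0)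
      have hmap : ∀ j : Fin (n + 1), ∃ j' : Fin (n + 1),
          ((j : ℕ) ≤ (i : ℕ) + 1 → ((j' : ℕ) ≤ (k : ℕ) + 1 ∧ t j' = t j * r)) := by
        intro j
        by_cases hj : (j : ℕ) ≤ (i : ℕ) + 1
        · have hSj : S ((t j * r) • (Pi.single k (1 : K) : Fin n → K)) := by
            have h1 := hmem i j hj
            rwa [hu_eq, smul_smul] at h1
          obtain ⟨j', hj', htj'⟩ := hline _ _ (mul_ne_zero (ht0 j) hr0) hSj
          exact ⟨j', fun _ => ⟨hj', htj'⟩⟩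
        · exact ⟨⟨0, z0lt⟩, fun h => absurd h hj⟩
      choose φ hφ using hmap
      have hik : (i : ℕ) ≤ (k : ℕ) := by
        by_contra hik
        push_neg at hik
        have hcard : (Finset.univ.filter (fun j : Fin (n + 1) => (j : ℕ) ≤ (k : ℕ) + 1)).card <
            (Finset.univ.filter (fun j : Fin (n + 1) => (j : ℕ) ≤ (i : ℕ) + 1)).card := by
          rw [card_filter_fin_le n _ (by omega), card_filter_fin_le n _ (by omega)]
          omega
        obtain ⟨x, hx, y, hy, hxy, hfxy⟩ :=
          Finset.exists_ne_map_eq_of_card_lt_of_maps_to hcard (f := φ) (fun j hj => by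
            simp only [Finset.mem_coe, Finset.mem_filter, Finset.mem_univ, true_and] at hj ⊢
            exact (hφ j hj).1)
        simp only [Finset.mem_filter, Finset.mem_univ, true_and] at hx hy
        have heq2 : t x * r = t y * r := by
          rw [← (hφ x hx).2, ← (hφ y hy).2, hfxy]
        exact hxy (ht (mul_right_cancel₀ hr0 heq2))
      exact ⟨k, r, hr0, hik, hu_eq⟩
    · exfalso
      have hu_eq : M.mulVec ((Pi.single i (1 : K) : Fin n → K)) = (t ⟨0, z0lt⟩)⁻¹ • w := by
        have h1 := congrArg (fun v : Fin n → K => (t ⟨0, z0lt⟩)⁻¹ • v) heq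
        rw [smul_smul, inv_mul_cancel₀ (ht0 ⟨0, z0lt⟩), one_smul] at h1
        exact h1
      have h1 : S ((t ⟨1, z1lt⟩ * (t ⟨0, z0lt⟩)⁻¹) • w) := by
        have h2 := hmem i ⟨1, z1lt⟩ (Nat.succ_le_succ (Nat.zero_le _))
        rwa [hu_eq, smul_smul] at h2
      have h3 := hwmul _ h1
      have h4 : t ⟨1, z1lt⟩ = t ⟨0, z0lt⟩ := (mul_inv_eq_one₀ (ht0 ⟨0, z0lt⟩)).mp h3
      have h5 := ht h4
      simp [Fin.ext_iff] at h5
  choose τ rr hrr0 hτle hτu using key1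
  have hτinj : Function.Injective τ := by
    intro a b hab
    by_contra hne
    have h1 : M.mulVec (rr b • (Pi.single a (1 : K) : Fin n → K)) = M.mulVec (rr a • (Pi.single b (1 : K) : Fin n → K)) := by
      rw [Matrix.mulVec_smul, Matrix.mulVec_smul, hτu a, hτu b, smul_smul, smul_smul, hab,
        mul_comm]
    have h2 := hMinj h1
    have h3 := congrFun h2 a
    simp [Pi.single_apply, hne] at h3
    exact hrr0 b h3
  have hτid : ∀ i, τ i = i := fin_inj_ge_eq_id τ hτinj hτle
  have hwsum : w = ∑ i : Fin n, (Pi.single i (1 : K) : Fin n → K) := by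
    funext m
    simp [hwdef, Finset.sum_apply, Pi.single_apply]
  have hL : ∀ m2 : Fin n, (∑ i : Fin n, rr i • (Pi.single i (1 : K) : Fin n → K)) m2 = rr m2 := by
    intro m2
    simp [Finset.sum_apply, Pi.single_apply, mul_ite, mul_one, mul_zero]
  have hMw : M.mulVec w = ∑ i : Fin n, rr i • (Pi.single i (1 : K) : Fin n → K) := by
    conv_lhs => rw [hwsum, ← Matrix.mulVecLin_apply]
    rw [map_sum]
    refine Finset.sum_congr rfl fun i _ => ?_
    rw [Matrix.mulVecLin_apply, hτu i, hτid i]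
  have hSMw : S (M.mulVec w) := hfwd w (Or.inr rfl)
  have hrr1 : ∀ m, rr m = 1 := by
    intro m
    rcases hSMw with ⟨i', j', hj', heq⟩ | heq
    · exfalso
      obtain ⟨m2, hm2⟩ := hNe i'
      have h1 := congrFun (hMw.symm.trans heq) m2
      rw [hL m2] at h1
      have hR : (t j' • (Pi.single i' (1 : K) : Fin n → K)) m2 = 0 := by simp [Pi.single_apply, hm2]
      rw [hR] at h1
      exact hrr0 m2 h1
    · have h1 := congrFun (hMw.symm.trans heq) m
      rw [hL m] at h1
      exact h1
  have hcol : ∀ i : Fin n, M.mulVec ((Pi.single i (1 : K) : Fin n → K)) = (Pi.single i (1 : K) : Fin n → K) := by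
    intro i
    rw [hτu i, hτid i, hrr1 i, one_smul]
  refine Units.ext ?_
  refine Matrix.ext fun i j => ?_
  have h := congrFun (hcol j) i
  simpa [Matrix.mulVec_single, Pi.single_apply, Matrix.one_apply, Units.val_one] using h

/-- Let `n ≥ 1` and let `K` be a field that is infinite or finite of cardinality greater
than `n + 1`. Then the distinguishing number of the action of `GLₙ(K)` on `Kⁿ` is `2`:
there is a distinguishing `2`-coloring, and no distinguishing `1`-coloring. -/
theorem distinguishingNumber_GL_eq_two (n : ℕ) (hn : 1 ≤ n) (K : Type*) [Field K]
    (hK : Infinite K ∨ n + 1 < Nat.card K) :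
    (∃ c : (Fin n → K) → Fin 2,
      ∀ A : GL (Fin n) K,
        (∀ v : Fin n → K, c ((A : Matrix (Fin n) (Fin n) K).mulVec v) = c v) → A = 1) ∧
    ¬ (∃ c : (Fin n → K) → Fin 1,
      ∀ A : GL (Fin n) K,
        (∀ v : Fin n → K, c ((A : Matrix (Fin n) (Fin n) K).mulVec v) = c v) → A = 1) := by
  classical
  obtain ⟨t, htinj, ht0⟩ := exists_distinct_nonzero n K hK
  constructor
  · rcases Nat.lt_or_ge n 2 with h2 | h2
    · -- n = 1
      have hn1 : n = 1 := by omega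
      subst hn1
      set w : Fin 1 → K := fun _ => 1 with hwdef
      refine ⟨fun v => if v = w then 0 else 1, ?_⟩
      intro A hc
      set M : Matrix (Fin 1) (Fin 1) K := (A : Matrix (Fin 1) (Fin 1) K) with hM
      have hMw : M.mulVec w = w := by
        by_contra hnw
        have h := hc w
        dsimp only at h
        rw [if_pos rfl, if_neg hnw] at h
        exact absurd h (by decide)
      refine Units.ext (Matrix.ext fun i j => ?_)
      have h := congrFun hMw i
      simp only [Matrix.mulVec, dotProduct, hwdef, Fin.sum_univ_one, mul_one] at h
      have hj : j = 0 := Subsingleton.elim j 0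
      simp only [Units.val_one]
      have hi1 : (1 : Matrix (Fin 1) (Fin 1) K) i j = 1 := by
        rw [Matrix.one_apply, if_pos (Subsingleton.elim i j)]
      rw [hi1, hj]
      exact h
    · exact key2 n h2 K t htinj ht0
  · rintro ⟨c, hc⟩
    set a : K := if t 0 = 1 then t 1 else t 0 with ha
    have ha0 : a ≠ 0 := by
      rw [ha]; split <;> apply ht0
    have ha1 : a ≠ 1 := by
      rw [ha]; split
      · rename_i h
        intro h1
        have := htinj (h1.trans h.symm)
        simp [Fin.ext_iff] at this
        omega
      · assumption
    set A : GL (Fin n) K := Units.map (Matrix.scalar (Fin n)).toMonoidHom (Units.mk0 a ha0)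
      with hA
    have hA1 : A = 1 := hc A (fun v => Subsingleton.elim _ _)
    have h := congrArg (fun B : GL (Fin n) K =>
      (B : Matrix (Fin n) (Fin n) K) ⟨0, hn⟩ ⟨0, hn⟩) hA1
    simp only [hA, Units.coe_map, RingHom.toMonoidHom_eq_coe, MonoidHom.coe_coe,
      Units.val_one, Matrix.scalar_apply, Units.val_mk0, Matrix.diagonal_apply_eq,
      Matrix.one_apply_eq] at h
    exact ha1 h
end

section
/- Let G be a group acting faithfully on a set X, let U be a set of representatives of the orbits of G on X (one element from each orbit), and let H = {g ∈ G | u^g = u for all u ∈ U} be the pointwise stabilizer of U. Let N be a normal subgroup of G with the property that whenever n₁, n₂ ∈ N are conjugate in G, then ⟨n₁⟩ = ⟨n₂⟩. Then H ∩ N = 1. -/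
/-- Let `G` act faithfully on `X`, let `U` be a set of orbit representatives (containing
exactly one element of each orbit), and let `N ⊴ G` be such that conjugate elements of `N`
generate the same cyclic subgroup. Then the only element of `N` fixing every element of `U`
is the identity, i.e. `H ∩ N = 1` where `H` is the pointwise stabilizer of `U`. -/
theorem pointwiseStabilizer_inter_normal_eq_bot {G X : Type*} [Group G]
    [MulAction G X] [FaithfulSMul G X]
    (U : Set X) (hU : ∀ x : X, ∃! u : X, u ∈ U ∧ u ∈ MulAction.orbit G x)
    (N : Subgroup G) [N.Normal]
    (hN : ∀ n₁ n₂ : G, n₁ ∈ N → n₂ ∈ N → IsConj n₁ n₂ →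
      Subgroup.zpowers n₁ = Subgroup.zpowers n₂) :
    ∀ n : G, n ∈ N → (∀ u ∈ U, n • u = u) → n = 1 := by
  intro n hn hfix
  apply FaithfulSMul.eq_of_smul_eq_smul (α := X)
  intro x
  rw [one_smul]
  obtain ⟨u, ⟨hu, g, hgu⟩, -⟩ := hU x
  have hgu' : x = g⁻¹ • u := by rw [← hgu]; simp
  have hconj : g * n * g⁻¹ ∈ N := Subgroup.Normal.conj_mem ‹N.Normal› n hn g
  have hc : IsConj (g * n * g⁻¹) n := (isConj_iff.mpr ⟨g, rfl⟩).symm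
  have hz : g * n * g⁻¹ ∈ Subgroup.zpowers n := by
    rw [← hN _ _ hconj hn hc]; exact Subgroup.mem_zpowers _
  obtain ⟨k, hk⟩ := hz
  have h1 : n⁻¹ • u = u := by rw [inv_smul_eq_iff, hfix u hu]
  have hnu : ∀ m : ℤ, (n ^ m) • u = u := by
    intro m
    induction m using Int.induction_on with
    | zero => simp
    | succ i ih => rw [zpow_add, zpow_one, mul_smul, hfix u hu, ih]
    | pred i ih => rw [sub_eq_add_neg, zpow_add, mul_smul, zpow_neg_one, h1, ih]
  have key : (g * n * g⁻¹) • u = u := by rw [← hk]; exact hnu k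
  calc n • x = n • g⁻¹ • u := by rw [← hgu']
    _ = g⁻¹ • (g * n * g⁻¹) • u := by simp [mul_smul]
    _ = g⁻¹ • u := by rw [key]
    _ = x := hgu'.symm
end

section
/- Let G be a finite nontrivial group acting faithfully on a finite set X. Let p be the smallest prime dividing the order of G, and let M be the cardinality of the largest orbit of the action of G on X. Then there exists a distinguishing coloring of X using at most ⌈M/(p−1)⌉ colors; in particular D_G(X) ≤ ⌈M/(p−1)⌉. -/
/-!
Number the points of each orbit injectively by `0, …, M - 1` and colour a point by the quotient
of its number by `p - 1`, so that each colour class meets each orbit in at most `p - 1` points.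
If some `g ≠ 1` preserved this colouring, the subgroup `S` of colour-preserving elements would
move some point `x`, by faithfulness. The size of the orbit `S • x` is a divisor `≠ 1` of `|S|`,
hence of `|G|`, so it is at least `p`; yet `S • x` lies in one colour class of the orbit `G • x`.
-/

open MulAction

section Fibers

variable {X ι : Type*} [Finite X] (f : X → ι)

theorem exists_injective_prodMk_fin {M : ℕ} (hM : ∀ x, Nat.card {y // f y = f x} ≤ M) :
    ∃ r : X → Fin M, Function.Injective fun x => (f x, r x) := by
  have hM' : ∀ i, Nat.card {y // f y = i} ≤ M := by
    intro i
    rcases isEmpty_or_nonempty {y // f y = i} with _ | ⟨⟨x, rfl⟩⟩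
    · simp
    · exact hM x
  let e i : {y // f y = i} → Fin M := Fin.castLE (hM' i) ∘ Finite.equivFin _
  have he i : Function.Injective (e i) := (Fin.castLE_injective _).comp (Equiv.injective _)
  have e_congr : ∀ {i j} (h : i = j) x (hx : f x = i), e i ⟨x, hx⟩ = e j ⟨x, hx.trans h⟩ := by
    rintro i _ rfl x hx
    rfl
  refine ⟨fun x => e (f x) ⟨x, rfl⟩, fun x y hxy => ?_⟩
  obtain ⟨hf, hr⟩ : f x = f y ∧ e (f x) ⟨x, rfl⟩ = e (f y) ⟨y, rfl⟩ := Prod.mk.inj hxy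
  rw [e_congr hf x rfl] at hr
  exact congrArg Subtype.val (he _ hr)

theorem exists_coloring_card_fiber_le {M k : ℕ} (hk : 0 < k)
    (hM : ∀ x, Nat.card {y // f y = f x} ≤ M) :
    ∃ c : X → Fin (M ⌈/⌉ k), ∀ x, Nat.card {y // f y = f x ∧ c y = c x} ≤ k := by
  obtain ⟨r, hr⟩ := exists_injective_prodMk_fin f hM
  have hlt x : (r x : ℕ) / k < M ⌈/⌉ k := by
    rw [Nat.div_lt_iff_lt_mul hk, mul_comm, ← smul_eq_mul]
    exact (r x).isLt.trans_le (le_smul_ceilDiv hk)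
  refine ⟨fun x => ⟨r x / k, hlt x⟩, fun x => ?_⟩
  -- `r y` is recovered from its quotient by `k`, fixed on the class, and its remainder.
  have hinj : Function.Injective
      fun y : {y // f y = f x ∧ (⟨r y / k, hlt y⟩ : Fin _) = ⟨r x / k, hlt x⟩} =>
        (⟨r y % k, Nat.mod_lt _ hk⟩ : Fin k) := by
    rintro ⟨y, hyf, hyc⟩ ⟨z, hzf, hzc⟩ hyz
    have hdiv : (r y : ℕ) / k = r z / k := (Fin.mk.inj hyc).trans (Fin.mk.inj hzc).symm
    have hmod : (r y : ℕ) % k = r z % k := Fin.mk.inj hyz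
    have hrv : r y = r z := Fin.ext <| by rw [← Nat.div_add_mod (r y) k, hdiv, hmod, Nat.div_add_mod]
    exact Subtype.ext <| hr (Prod.ext (hyf.trans hzf.symm) hrv)
  simpa using Nat.card_le_card_of_injective _ hinj

end Fibers

theorem le_card_orbit_of_forall_prime_dvd {H X : Type*} [Group H] [Finite H] [MulAction H X]
    {p : ℕ} (hp : ∀ q : ℕ, q.Prime → q ∣ Nat.card H → p ≤ q) {x : X} {h : H} (hx : h • x ≠ x) :
    p ≤ Nat.card (orbit H x) := by
  have hindex : (stabilizer H x).index = Nat.card (orbit H x) := index_stabilizer H x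
  have hdvd : Nat.card (orbit H x) ∣ Nat.card H := hindex ▸ (stabilizer H x).index_dvd_card
  have hne : Nat.card (orbit H x) ≠ 1 := by
    rw [← hindex, Ne, Subgroup.index_eq_one]
    exact fun htop => hx (htop ▸ Subgroup.mem_top h : h ∈ stabilizer H x)
  have hpos : 0 < Nat.card (orbit H x) := Nat.pos_of_dvd_of_pos hdvd Nat.card_pos
  calc p ≤ (Nat.card (orbit H x)).minFac :=
        hp _ (Nat.minFac_prime hne) ((Nat.minFac_dvd _).trans hdvd)
    _ ≤ Nat.card (orbit H x) := Nat.minFac_le hpos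

section ColoringStabilizer

variable (G : Type*) {X C : Type*} [Group G] [MulAction G X]

def coloringStabilizer (c : X → C) : Subgroup G where
  carrier := {g | ∀ x, c (g • x) = c x}
  one_mem' x := by rw [one_smul]
  mul_mem' {g h} hg hh x := by rw [mul_smul, hg, hh]
  inv_mem' {g} hg x := by rw [← hg (g⁻¹ • x), smul_inv_smul]

variable {G}

theorem orbit_coloringStabilizer_subset (c : X → C) (x : X) :
    orbit (coloringStabilizer G c) x ⊆ {y | orbit G y = orbit G x ∧ c y = c x} := by
  rintro _ ⟨⟨g, hg⟩, rfl⟩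
  exact ⟨orbit_smul g x, hg x⟩

end ColoringStabilizer

theorem distinguishing_le_ceil_maxOrbit_general {G X : Type*} [Group G] [Finite G]
    [MulAction G X] [Finite X] [FaithfulSMul G X]
    (p : ℕ) (hp : p.Prime ∧ p ∣ Nat.card G ∧
      ∀ q : ℕ, q.Prime → q ∣ Nat.card G → p ≤ q)
    (M : ℕ) (hM : IsGreatest {m : ℕ | ∃ x : X, Nat.card (MulAction.orbit G x) = m} M) :
    ∃ c : X → Fin (M ⌈/⌉ (p - 1)), ∀ g : G, (∀ x : X, c (g • x) = c x) → g = 1 := by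
  obtain ⟨hp, -, hmin⟩ := hp
  have hfiber (x : X) : Nat.card {y // orbit G y = orbit G x} ≤ M := by
    simpa only [orbit_eq_iff] using hM.2 ⟨x, rfl⟩
  obtain ⟨c, hc⟩ := exists_coloring_card_fiber_le (fun x => orbit G x)
    (Nat.sub_pos_of_lt hp.one_lt) hfiber
  refine ⟨c, fun g hg => ?_⟩
  by_contra hg1
  obtain ⟨x, hx⟩ : ∃ x : X, g • x ≠ x := by
    by_contra! hfix
    exact hg1 (eq_of_smul_eq_smul fun x => by rw [hfix, one_smul])
  have hlower : p ≤ Nat.card (orbit (coloringStabilizer G c) x) :=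
    le_card_orbit_of_forall_prime_dvd
      (fun q hq hdvd => hmin q hq (hdvd.trans (Subgroup.card_subgroup_dvd_card _)))
      (h := ⟨g, hg⟩) hx
  have hupper : Nat.card (orbit (coloringStabilizer G c) x) ≤ p - 1 :=
    (Nat.card_mono (Set.toFinite _) (orbit_coloringStabilizer_subset c x)).trans (hc x)
  have := hp.one_lt
  omega

/-- Let a finite nontrivial group `G` act faithfully on a finite set `X`, let `p` be the
smallest prime dividing `|G|`, and let `M` be the size of the largest orbit. Then there is
a distinguishing coloring of `X` with at most `⌈M / (p - 1)⌉` colors. -/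
theorem distinguishing_le_ceil_maxOrbit {G X : Type*} [Group G] [Finite G] [Nontrivial G]
    [MulAction G X] [Finite X] [FaithfulSMul G X]
    (p : ℕ) (hp : p.Prime ∧ p ∣ Nat.card G ∧
      ∀ q : ℕ, q.Prime → q ∣ Nat.card G → p ≤ q)
    (M : ℕ) (hM : IsGreatest {m : ℕ | ∃ x : X, Nat.card (MulAction.orbit G x) = m} M) :
    ∃ c : X → Fin (M ⌈/⌉ (p - 1)), ∀ g : G, (∀ x : X, c (g • x) = c x) → g = 1 :=
  distinguishing_le_ceil_maxOrbit_general p hp M hM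
end
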